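/- arXiv:1903.11090 — 7 statements merged into one kernel-verified Lean document; each statement's English description precedes it below -/
import Mathlib

section
/- Let N ≥ 3, μ ∈ (0,1/4], q ∈ (1,2), and let β₀ > 0, ε₀ > 0, R₁ > 0. Set γ := (2−q)/(q−1). There exists a constant C* > 0 depending only on N, μ, q, ε₀ and R₁ such that the following holds: for every C₁ ≥ C*, every nonempty bounded open set Ω ⊂ ℝ^N contained in the ball B(0,R₁), the function v(x) := C₁·(|x| − β₀/4)^{−γ} satisfies Δv(x) + (μ/δ(x)²)·v(x) ≤ ‖∇v(x)‖^q at every point x ∈ Ω with |x| > β₀/4 and δ(x) ≥ ε₀, where δ(x) denotes the Euclidean distance from x to the complement of Ω. -/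
/-! With `s = ‖x‖ - β₀/4` and `v = C s^(-γ)`, the radial formulas give
`Δv = C γ (γ+1) s^(-γ-2) - (N-1) C γ s^(-γ-1) / ‖x‖ ≤ C γ (γ+1) s^(-γ-2)`
and `‖∇v‖ = C γ s^(-γ-1)`. The exponent `γ = (2-q)/(q-1)` is the one for which
`(γ+1) q = γ+2`, so `‖∇v‖^q = C^q γ^q s^(-γ-2)` carries the same power of `s` as the Laplacian.
As `s < R₁` and `δ ≥ ε₀`, the Hardy term is at most `C (μ R₁² / ε₀²) s^(-γ-2)`, and everything
reduces to `C K ≤ C^q γ^q` with `K = γ(γ+1) + μ R₁²/ε₀²`, which holds as soon as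
`C^(q-1) ≥ K / γ^q` because `q > 1`. -/

open MeasureTheory Metric Set

/-- The Laplacian of `u : ℝ^N → ℝ`, as the sum of the second partial derivatives
in the coordinate directions. -/
noncomputable def lap {N : ℕ} (u : EuclideanSpace ℝ (Fin N) → ℝ)
    (x : EuclideanSpace ℝ (Fin N)) : ℝ :=
  ∑ i : Fin N, fderiv ℝ (fun y => fderiv ℝ u y (EuclideanSpace.single i 1)) x
    (EuclideanSpace.single i 1)

open Filter Topology

section Radial

variable {E : Type*} [NormedAddCommGroup E] [InnerProductSpace ℝ E] {x : E}

theorem hasFDerivAt_norm (hx : x ≠ 0) :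
    HasFDerivAt (fun y : E => ‖y‖) (‖x‖⁻¹ • innerSL ℝ x) x := by
  have h := (hasStrictFDerivAt_norm_sq x).hasFDerivAt.sqrt (by positivity)
  simp only [Real.sqrt_sq (norm_nonneg _)] at h
  convert h using 1
  rw [two_smul, smul_add, ← add_smul]
  congr 1
  field_simp
  norm_num

theorem HasDerivAt.hasFDerivAt_comp_norm {g : ℝ → ℝ} {g' : ℝ} (hg : HasDerivAt g g' ‖x‖)
    (hx : x ≠ 0) : HasFDerivAt (fun y => g ‖y‖) ((g' / ‖x‖) • innerSL ℝ x) x := by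
  rw [div_eq_mul_inv, ← smul_smul]
  exact hg.comp_hasFDerivAt x (hasFDerivAt_norm hx)

theorem norm_gradient_comp_norm [CompleteSpace E] {g : ℝ → ℝ} {g' : ℝ}
    (hg : HasDerivAt g g' ‖x‖) (hx : x ≠ 0) : ‖gradient (fun y => g ‖y‖) x‖ = |g'| := by
  rw [gradient, LinearIsometryEquiv.norm_map, (hg.hasFDerivAt_comp_norm hx).fderiv, norm_smul,
    innerSL_apply_norm, Real.norm_eq_abs, abs_div, abs_norm,
    div_mul_cancel₀ _ (norm_ne_zero_iff.2 hx)]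

end Radial

theorem lap_comp_norm {N : ℕ} {g g' : ℝ → ℝ} {g'' : ℝ} {x : EuclideanSpace ℝ (Fin N)}
    (hx : x ≠ 0) (hg : ∀ᶠ t in 𝓝 ‖x‖, HasDerivAt g (g' t) t)
    (hg' : HasDerivAt g' g'' ‖x‖) :
    lap (fun y => g ‖y‖) x = g'' + (N - 1) * g' ‖x‖ / ‖x‖ := by
  set r := ‖x‖
  have hr : r ≠ 0 := norm_ne_zero_iff.2 hx
  have hh : HasDerivAt (fun t => g' t / t) ((g'' * r - g' r * 1) / r ^ 2) r :=
    hg'.div (hasDerivAt_id r) hr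
  have hfderiv : ∀ᶠ y in 𝓝 x,
      fderiv ℝ (fun y => g ‖y‖) y = (g' ‖y‖ / ‖y‖) • innerSL ℝ y := by
    filter_upwards [continuous_norm.continuousAt.eventually hg, eventually_ne_nhds hx]
      with y hgy hy
    exact (hgy.hasFDerivAt_comp_norm hy).fderiv
  have hpartial : ∀ i,
      fderiv ℝ (fun y => fderiv ℝ (fun y => g ‖y‖) y (EuclideanSpace.single i 1)) x
        (EuclideanSpace.single i 1) = g' r / r + (g'' * r - g' r) / r ^ 2 / r * x i ^ 2 := by
    intro i
    set e : EuclideanSpace ℝ (Fin N) := EuclideanSpace.single i 1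
    have heq : (fun y => fderiv ℝ (fun y => g ‖y‖) y e)
        =ᶠ[𝓝 x] fun y => g' ‖y‖ / ‖y‖ * inner ℝ e y := by
      filter_upwards [hfderiv] with y hy
      rw [hy, smul_apply, innerSL_apply_apply, real_inner_comm, smul_eq_mul]
    have hd : HasFDerivAt (fun y => inner ℝ e y) (innerSL ℝ e) x :=
      (innerSL ℝ e).hasFDerivAt
    rw [heq.fderiv_eq, ((hh.hasFDerivAt_comp_norm hx).fun_mul hd).fderiv]
    simp only [e, add_apply, smul_apply, coe_innerSL_apply, inner_self_eq_norm_sq_to_K,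
      PiLp.norm_single, norm_one, one_pow, smul_eq_mul, EuclideanSpace.inner_single_left,
      EuclideanSpace.inner_single_right, Real.ringHom_apply, one_mul, mul_one]
    ring
  have hsum : ∑ i, x i ^ 2 = r ^ 2 := (EuclideanSpace.real_norm_sq_eq x).symm
  simp only [lap, hpartial, Finset.sum_add_distrib, ← Finset.mul_sum, hsum, Finset.sum_const,
    Finset.card_univ, Fintype.card_fin, nsmul_eq_mul]
  field_simp
  ring

theorem hasDerivAt_mul_sub_rpow (C a p : ℝ) {t : ℝ} (ht : t ≠ a) :
    HasDerivAt (fun t => C * (t - a) ^ p) (C * p * (t - a) ^ (p - 1)) t := by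
  simpa [mul_assoc] using
    (((hasDerivAt_id t).sub_const a).rpow_const (Or.inl (sub_ne_zero.2 ht))).const_mul C

theorem lap_mul_sub_rpow_norm {N : ℕ} (C a p : ℝ) {x : EuclideanSpace ℝ (Fin N)}
    (ha : 0 ≤ a) (hx : a < ‖x‖) :
    lap (fun y => C * (‖y‖ - a) ^ p) x = C * p * (p - 1) * (‖x‖ - a) ^ (p - 2)
      + (N - 1) * (C * p * (‖x‖ - a) ^ (p - 1)) / ‖x‖ := by
  have hg : ∀ᶠ t in 𝓝 ‖x‖,
      HasDerivAt (fun t => C * (t - a) ^ p) (C * p * (t - a) ^ (p - 1)) t :=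
    (eventually_ne_nhds hx.ne').mono fun t ht => hasDerivAt_mul_sub_rpow C a p ht
  rw [lap_comp_norm (norm_pos_iff.1 (ha.trans_lt hx)) hg
    (hasDerivAt_mul_sub_rpow (C * p) a (p - 1) hx.ne'), sub_sub, one_add_one_eq_two]

theorem lap_mul_sub_rpow_neg_norm_le {N : ℕ} (hN : 1 ≤ N) {C a γ : ℝ} (hC : 0 ≤ C)
    (hγ : 0 ≤ γ) {x : EuclideanSpace ℝ (Fin N)} (ha : 0 ≤ a) (hx : a < ‖x‖) :
    lap (fun y => C * (‖y‖ - a) ^ (-γ)) x ≤ C * (γ * (γ + 1)) * (‖x‖ - a) ^ (-γ - 2) := by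
  have hN' : (0 : ℝ) ≤ N - 1 := sub_nonneg.2 (by exact_mod_cast hN)
  rw [lap_mul_sub_rpow_norm C a (-γ) ha hx]
  calc _ = C * (γ * (γ + 1)) * (‖x‖ - a) ^ (-γ - 2)
        - (N - 1) * (C * γ * (‖x‖ - a) ^ (-γ - 1) / ‖x‖) := by ring
    _ ≤ _ := sub_le_self _ (mul_nonneg hN' (by positivity))

theorem norm_gradient_mul_sub_rpow_neg_norm {N : ℕ} {C a γ : ℝ} (hC : 0 ≤ C) (hγ : 0 ≤ γ)
    {x : EuclideanSpace ℝ (Fin N)} (ha : 0 ≤ a) (hx : a < ‖x‖) :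
    ‖gradient (fun y => C * (‖y‖ - a) ^ (-γ)) x‖ = C * γ * (‖x‖ - a) ^ (-γ - 1) := by
  have hs : 0 < ‖x‖ - a := sub_pos.2 hx
  rw [norm_gradient_comp_norm (hasDerivAt_mul_sub_rpow C a (-γ) hx.ne')
    (norm_pos_iff.1 (ha.trans_lt hx)), mul_neg, neg_mul, abs_neg, abs_of_nonneg (by positivity)]

theorem div_sq_mul_mul_rpow_le {μ ε δ C s R p : ℝ} (hμ : 0 ≤ μ) (hε : 0 < ε) (hδ : ε ≤ δ)
    (hC : 0 ≤ C) (hs : 0 < s) (hsR : s ≤ R) :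
    μ / δ ^ 2 * (C * s ^ p) ≤ C * (μ / ε ^ 2 * R ^ 2) * s ^ (p - 2) := by
  have hsp : s ^ p = s ^ (p - 2) * s ^ 2 := by
    rw [← Real.rpow_natCast, ← Real.rpow_add hs]; norm_num
  calc μ / δ ^ 2 * (C * s ^ p) = μ / δ ^ 2 * s ^ 2 * (C * s ^ (p - 2)) := by
        rw [hsp]; ring
    _ ≤ μ / ε ^ 2 * R ^ 2 * (C * s ^ (p - 2)) := by gcongr
    _ = C * (μ / ε ^ 2 * R ^ 2) * s ^ (p - 2) := by ring

theorem mul_le_rpow_mul_of_rpow_inv_le {K c C q : ℝ} (hK : 0 < K) (hc : 0 < c) (hq : 1 < q)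
    (hC : (K / c) ^ (q - 1)⁻¹ ≤ C) : C * K ≤ C ^ q * c := by
  have hC0 : 0 < C := (Real.rpow_pos_of_pos (div_pos hK hc) _).trans_le hC
  have hKC : K / c ≤ C ^ (q - 1) := by
    calc K / c = ((K / c) ^ (q - 1)⁻¹) ^ (q - 1) :=
          (Real.rpow_inv_rpow (div_pos hK hc).le (by linarith)).symm
      _ ≤ C ^ (q - 1) := by gcongr
  calc C * K ≤ C * (C ^ (q - 1) * c) := by gcongr; rwa [← div_le_iff₀ hc]
    _ = C ^ q * c := by rw [Real.rpow_sub_one hC0.ne']; field_simp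

theorem stmt_1_general (N : ℕ) (hN : 3 ≤ N) (μ q β₀ ε₀ R₁ : ℝ)
    (hμ : μ ∈ Set.Ioc (0:ℝ) (1/4)) (hq : q ∈ Set.Ioo (1:ℝ) 2)
    (hβ₀ : 0 < β₀) (hε₀ : 0 < ε₀) :
    ∃ Cstar : ℝ, 0 < Cstar ∧
      ∀ C₁ ≥ Cstar,
        ∀ Ω : Set (EuclideanSpace ℝ (Fin N)), Ω.Nonempty → Bornology.IsBounded Ω →
          IsOpen Ω → Ω ⊆ Metric.ball 0 R₁ →
          ∀ x ∈ Ω, β₀ / 4 < ‖x‖ → ε₀ ≤ infDist x Ωᶜ →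
            lap (fun y => C₁ * (‖y‖ - β₀ / 4) ^ (-((2 - q) / (q - 1)))) x
              + (μ / (infDist x Ωᶜ) ^ 2) * (C₁ * (‖x‖ - β₀ / 4) ^ (-((2 - q) / (q - 1))))
              ≤ ‖gradient (fun y => C₁ * (‖y‖ - β₀ / 4) ^ (-((2 - q) / (q - 1)))) x‖ ^ q := by
  obtain ⟨hq₁, hq₂⟩ := hq
  set γ := (2 - q) / (q - 1) with hγ
  have hγ₀ : 0 < γ := div_pos (by linarith) (by linarith)
  have hγq : (-γ - 1) * q = -γ - 2 := by rw [hγ]; field_simp; ring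
  set K := γ * (γ + 1) + μ / ε₀ ^ 2 * R₁ ^ 2
  have hK : 0 < K := by have := hμ.1; positivity
  refine ⟨(K / γ ^ q) ^ (q - 1)⁻¹, by positivity, fun C hC Ω _ _ _ hΩ x hxΩ hxa hδ => ?_⟩
  have hC₀ : 0 < C := (by positivity : 0 < (K / γ ^ q) ^ (q - 1)⁻¹).trans_le hC
  have ha : 0 ≤ β₀ / 4 := by positivity
  have hs : 0 < ‖x‖ - β₀ / 4 := by linarith
  have hsR : ‖x‖ - β₀ / 4 ≤ R₁ := by linarith [mem_ball_zero_iff.1 (hΩ hxΩ)]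
  calc _ ≤ C * (γ * (γ + 1)) * (‖x‖ - β₀ / 4) ^ (-γ - 2)
        + C * (μ / ε₀ ^ 2 * R₁ ^ 2) * (‖x‖ - β₀ / 4) ^ (-γ - 2) :=
        add_le_add (lap_mul_sub_rpow_neg_norm_le (by omega) hC₀.le hγ₀.le ha hxa)
          (div_sq_mul_mul_rpow_le hμ.1.le hε₀ hδ hC₀.le hs hsR)
    _ = C * K * (‖x‖ - β₀ / 4) ^ (-γ - 2) := by ring
    _ ≤ C ^ q * γ ^ q * (‖x‖ - β₀ / 4) ^ (-γ - 2) := by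
        gcongr ?_ * _
        exact mul_le_rpow_mul_of_rpow_inv_le hK (by positivity) hq₁ hC
    _ = (C * γ * (‖x‖ - β₀ / 4) ^ (-γ - 1)) ^ q := by
        rw [Real.mul_rpow (by positivity) (by positivity), Real.mul_rpow hC₀.le hγ₀.le,
          ← Real.rpow_mul hs.le, hγq]
    _ = _ := by rw [norm_gradient_mul_sub_rpow_neg_norm hC₀.le hγ₀.le ha hxa]

/-- The radial supersolution of `-L_μ v + |∇v|^q = 0` from Step 1 of the proof of
Proposition E. -/
theorem stmt_1 (N : ℕ) (hN : 3 ≤ N) (μ q β₀ ε₀ R₁ : ℝ)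
    (hμ : μ ∈ Set.Ioc (0:ℝ) (1/4)) (hq : q ∈ Set.Ioo (1:ℝ) 2)
    (hβ₀ : 0 < β₀) (hε₀ : 0 < ε₀) (hR₁ : 0 < R₁) :
    ∃ Cstar : ℝ, 0 < Cstar ∧
      ∀ C₁ ≥ Cstar,
        ∀ Ω : Set (EuclideanSpace ℝ (Fin N)), Ω.Nonempty → Bornology.IsBounded Ω →
          IsOpen Ω → Ω ⊆ Metric.ball 0 R₁ →
          ∀ x ∈ Ω, β₀ / 4 < ‖x‖ → ε₀ ≤ infDist x Ωᶜ →
            lap (fun y => C₁ * (‖y‖ - β₀ / 4) ^ (-((2 - q) / (q - 1)))) x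
              + (μ / (infDist x Ωᶜ) ^ 2) * (C₁ * (‖x‖ - β₀ / 4) ^ (-((2 - q) / (q - 1))))
              ≤ ‖gradient (fun y => C₁ * (‖y‖ - β₀ / 4) ^ (-((2 - q) / (q - 1)))) x‖ ^ q :=
  stmt_1_general N hN μ q β₀ ε₀ R₁ hμ hq hβ₀ hε₀
end

section
/- Let N ≥ 3, μ ∈ (0,1/4], and let Ω ⊂ ℝ^N be a nonempty bounded open connected set; write δ(x) for the Euclidean distance from x to the complement of Ω. Let g : [0,∞) → [0,∞) be locally Lipschitz, nondecreasing, with g(0) = 0. Suppose u is twice continuously differentiable on Ω, u ≥ 0 on Ω, and Δu(x) + (μ/δ(x)²)·u(x) = g(‖∇u(x)‖) for all x ∈ Ω. If u(x₀) = 0 for some x₀ ∈ Ω, then u is identically zero on Ω. -/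
open MeasureTheory Metric Set

/-!
Since `u ≥ 0`, the Hardy term `μ u / δ²` is nonnegative, so `Δu ≤ g(|∇u|)`; as `g` is monotone and
Lipschitz at `0` with `g 0 = 0`, this gives `Δu ≤ L |∇u|` on every compact subset of `Ω`.
For such differential inequalities Hopf's boundary lemma holds: if `u > 0` on a ball and `u = 0`
at a boundary point `y`, comparison on an annulus with `ε (e^{-α|x-p|²} - e^{-αR²})`, a strict
subsolution for `α` large, forces a nonzero derivative of `u` at `y`. A zero of `u ≥ 0` inside
`Ω` is a critical point, so it never lies on the boundary of a ball where `u > 0`; applied to the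
largest such ball around a point near a zero, this shows that the zero set of `u` is open. It is
also relatively closed, and `Ω` is connected.
-/

open Filter Topology Laplacian InnerProductSpace Module

lemma IsLocalMax.deriv_deriv_nonpos {φ : ℝ → ℝ} {a : ℝ} (hmax : IsLocalMax φ a)
    (hφ : ContinuousAt φ a) : deriv (deriv φ) a ≤ 0 := by
  -- if `φ'' a > 0` then `a` is also a local min, so `φ` is locally constant and `φ'' a = 0`
  by_contra! hpos
  have hmin : IsLocalMin φ a := isLocalMin_of_deriv_deriv_pos hpos hmax.deriv_eq_zero hφ
  have hconst : φ =ᶠ[𝓝 a] fun _ => φ a := by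
    filter_upwards [hmax, hmin] with t h₁ h₂ using le_antisymm h₁ h₂
  exact hpos.ne' (by simpa using hconst.deriv.deriv_eq)

section SecondDerivative

variable {E : Type*} [NormedAddCommGroup E] {f : E → ℝ} {x : E}

lemma ContDiffAt.hasFDerivAt_fderiv_apply [NormedSpace ℝ E] (hf : ContDiffAt ℝ 2 f x) (v : E) :
    HasFDerivAt (fun y => fderiv ℝ f y v) ((fderiv ℝ (fderiv ℝ f) x).flip v) x := by
  have h := ((hf.fderiv_right (m := 1) le_rfl).differentiableAt one_ne_zero).hasFDerivAt
  simpa using h.clm_apply (hasFDerivAt_const v x)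

lemma IsLocalMax.fderiv_fderiv_apply_self_nonpos [NormedSpace ℝ E] (hmax : IsLocalMax f x)
    (hf : ContDiffAt ℝ 2 f x) (v : E) : fderiv ℝ (fderiv ℝ f) x v v ≤ 0 := by
  set ℓ : ℝ → E := fun s => x + s • v
  have hℓ0 : ℓ 0 = x := by simp [ℓ]
  have hℓ : ∀ t, HasDerivAt ℓ v t := fun t => by
    have h := ((hasDerivAt_id t).smul_const v).const_add x
    rwa [one_smul] at h
  have hℓc : ContinuousAt ℓ 0 := (hℓ 0).continuousAt
  have hdiff : ∀ᶠ t in 𝓝 (0 : ℝ), DifferentiableAt ℝ f (ℓ t) := by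
    refine hℓc.eventually ?_
    rw [hℓ0]
    exact (hf.eventually (by simp)).mono fun y hy => hy.differentiableAt two_ne_zero
  have hderiv : deriv (f ∘ ℓ) =ᶠ[𝓝 0] fun t => fderiv ℝ f (ℓ t) v := by
    filter_upwards [hdiff] with t ht using (ht.hasFDerivAt.comp_hasDerivAt t (hℓ t)).deriv
  have hderiv2 : HasDerivAt (fun t => fderiv ℝ f (ℓ t) v) (fderiv ℝ (fderiv ℝ f) x v v) 0 :=
    (hf.hasFDerivAt_fderiv_apply v).comp_hasDerivAt_of_eq 0 (hℓ 0) hℓ0.symm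
  rw [← hderiv2.deriv, ← hderiv.deriv_eq]
  rw [← hℓ0] at hmax hf
  exact (hmax.comp_continuous hℓc).deriv_deriv_nonpos (hf.continuousAt.comp hℓc)

lemma IsLocalMax.laplacian_nonpos [InnerProductSpace ℝ E] [FiniteDimensional ℝ E]
    (hmax : IsLocalMax f x) (hf : ContDiffAt ℝ 2 f x) : Δ f x ≤ 0 := by
  rw [laplacian_eq_iteratedFDeriv_stdOrthonormalBasis]
  exact Finset.sum_nonpos fun i _ => by
    simpa [iteratedFDeriv_two_apply] using hmax.fderiv_fderiv_apply_self_nonpos hf _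

end SecondDerivative

lemma lap_eq_laplacian {N : ℕ} {u : EuclideanSpace ℝ (Fin N) → ℝ} {x : EuclideanSpace ℝ (Fin N)}
    (hu : ContDiffAt ℝ 2 u x) : lap u x = Δ u x := by
  rw [laplacian_eq_iteratedFDeriv_orthonormalBasis u (EuclideanSpace.basisFun (Fin N) ℝ), lap]
  simp [iteratedFDeriv_two_apply, (hu.hasFDerivAt_fderiv_apply _).fderiv]

section Barrier

variable {E : Type*} [NormedAddCommGroup E]

noncomputable def gaussianBarrier (p : E) (α : ℝ) (x : E) : ℝ := Real.exp (-α * ‖x - p‖ ^ 2)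

lemma gaussianBarrier_pos (p : E) (α : ℝ) (x : E) : 0 < gaussianBarrier p α x := Real.exp_pos _

lemma gaussianBarrier_of_mem_sphere {p x : E} {r : ℝ} (α : ℝ) (hx : x ∈ sphere p r) :
    gaussianBarrier p α x = Real.exp (-α * r ^ 2) := by
  rw [gaussianBarrier, mem_sphere_iff_norm.1 hx]

variable [InnerProductSpace ℝ E] (p : E) (α : ℝ)

lemma contDiff_gaussianBarrier : ContDiff ℝ 2 (gaussianBarrier p α) :=
  (contDiff_const.mul ((contDiff_id.sub contDiff_const).norm_sq ℝ)).exp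

lemma hasFDerivAt_gaussianBarrier (x : E) :
    HasFDerivAt (gaussianBarrier p α)
      ((-(2 * α) * gaussianBarrier p α x) • innerSL ℝ (x - p)) x := by
  refine ((((hasFDerivAt_id x).sub_const p).norm_sq).const_mul (-α)).exp.congr_fderiv ?_
  ext v
  simp [gaussianBarrier]
  ring

lemma fderiv_gaussianBarrier :
    fderiv ℝ (gaussianBarrier p α) =
      fun x => (-(2 * α) * gaussianBarrier p α x) • innerSL ℝ (x - p) :=
  funext fun x => (hasFDerivAt_gaussianBarrier p α x).fderiv

lemma norm_fderiv_gaussianBarrier {α : ℝ} (hα : 0 ≤ α) (x : E) :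
    ‖fderiv ℝ (gaussianBarrier p α) x‖ = 2 * α * gaussianBarrier p α x * ‖x - p‖ := by
  rw [fderiv_gaussianBarrier, norm_smul, innerSL_apply_norm, Real.norm_eq_abs,
    abs_of_nonpos (by nlinarith [gaussianBarrier_pos p α x])]
  ring

lemma fderiv_fderiv_gaussianBarrier_apply (x v : E) :
    fderiv ℝ (fderiv ℝ (gaussianBarrier p α)) x v v =
      gaussianBarrier p α x * (4 * α ^ 2 * ⟪x - p, v⟫_ℝ ^ 2 - 2 * α * ‖v‖ ^ 2) := by
  have hinner : HasFDerivAt (fun y : E => innerSL ℝ (y - p)) (innerSL ℝ) x :=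
    (innerSL ℝ).hasFDerivAt.comp x ((hasFDerivAt_id x).sub_const p)
  have h : HasFDerivAt (fun y => (-(2 * α) * gaussianBarrier p α y) • innerSL ℝ (y - p)) _ x :=
    ((hasFDerivAt_gaussianBarrier p α x).const_mul (-(2 * α))).smul hinner
  rw [fderiv_gaussianBarrier, h.fderiv]
  simp only [add_apply, smul_apply, ContinuousLinearMap.smulRight_apply, innerSL_apply_apply,
    smul_eq_mul]
  erw [innerSL_apply_apply, real_inner_self_eq_norm_sq]
  ring

variable [FiniteDimensional ℝ E]

lemma laplacian_gaussianBarrier (x : E) :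
    Δ (gaussianBarrier p α) x =
      gaussianBarrier p α x * (4 * α ^ 2 * ‖x - p‖ ^ 2 - 2 * α * finrank ℝ E) := by
  let b := stdOrthonormalBasis ℝ E
  have hparseval : ∑ i, ⟪x - p, b i⟫_ℝ ^ 2 = ‖x - p‖ ^ 2 := by
    simpa [sq, real_inner_comm, real_inner_self_eq_norm_sq] using
      b.sum_inner_mul_inner (x - p) (x - p)
  rw [laplacian_eq_iteratedFDeriv_orthonormalBasis _ b]
  simp only [iteratedFDeriv_two_apply, Matrix.cons_val_zero, Matrix.cons_val_one,
    fderiv_fderiv_gaussianBarrier_apply, b.orthonormal.1, ← Finset.mul_sum, Finset.sum_sub_distrib,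
    hparseval]
  simp

lemma mul_norm_fderiv_gaussianBarrier_lt_laplacian {L : ℝ} (hα : 0 < α) {x : E}
    (h : finrank ℝ E + L * ‖x - p‖ < 2 * α * ‖x - p‖ ^ 2) :
    L * ‖fderiv ℝ (gaussianBarrier p α) x‖ < Δ (gaussianBarrier p α) x := by
  rw [laplacian_gaussianBarrier, norm_fderiv_gaussianBarrier p hα.le]
  nlinarith [mul_pos (mul_pos hα (gaussianBarrier_pos p α x)) (sub_pos.2 h)]

end Barrier

lemma closedBall_diff_ball_diff_interior_subset {X : Type*} [PseudoMetricSpace X] (p : X)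
    (r R : ℝ) :
    (closedBall p R \ ball p r) \ interior (closedBall p R \ ball p r) ⊆
      sphere p R ∪ sphere p r := by
  rintro x ⟨⟨hxR, hxr⟩, hint⟩
  rw [mem_closedBall] at hxR
  rw [mem_ball, not_lt] at hxr
  by_contra! hs
  simp only [mem_union, mem_sphere, not_or] at hs
  have hshell : IsOpen {z | r < dist z p ∧ dist z p < R} :=
    (isOpen_lt continuous_const (continuous_id.dist continuous_const)).inter
      (isOpen_lt (continuous_id.dist continuous_const) continuous_const)
  have hshell_sub : {z | r < dist z p ∧ dist z p < R} ⊆ closedBall p R \ ball p r :=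
    fun z hz => ⟨mem_closedBall.2 hz.2.le, fun hzr => (mem_ball.1 hzr).not_gt hz.1⟩
  exact hint <| interior_maximal hshell_sub hshell
    (show x ∈ {z | r < dist z p ∧ dist z p < R} from
      ⟨lt_of_le_of_ne hxr (Ne.symm hs.2), lt_of_le_of_ne hxR hs.1⟩)

lemma segment_midpoint_subset_closedBall_diff_ball {E : Type*} [NormedAddCommGroup E]
    [NormedSpace ℝ E] {p y : E} {R : ℝ} (hy : y ∈ sphere p R) :
    segment ℝ y (midpoint ℝ y p) ⊆ closedBall p R \ ball p (R / 2) := by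
  rw [segment_eq_image']
  rintro _ ⟨θ, ⟨hθ₀, hθ₁⟩, rfl⟩
  have hR : 0 ≤ R := by simpa [mem_sphere_iff_norm.1 hy] using norm_nonneg (y - p)
  have hdist : y + θ • (midpoint ℝ y p - y) - p = (1 - θ / 2) • (y - p) := by
    rw [midpoint_eq_smul_add, invOf_eq_inv]
    module
  rw [Set.mem_sdiff, mem_closedBall_iff_norm, mem_ball_iff_norm, hdist, norm_smul,
    mem_sphere_iff_norm.1 hy, Real.norm_of_nonneg (by linarith)]
  constructor <;> nlinarith

lemma fderiv_pos_of_isMinOn_sub_smul_gaussianBarrier {E : Type*} [NormedAddCommGroup E]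
    [InnerProductSpace ℝ E] {u : E → ℝ} {p y : E} {R α ε : ℝ}
    (hR : 0 < R) (hα : 0 < α) (hε : 0 < ε) (hy : y ∈ sphere p R) (hu : DifferentiableAt ℝ u y)
    (hmin : IsMinOn (u - ε • gaussianBarrier p α) (closedBall p R \ ball p (R / 2)) y) :
    0 < fderiv ℝ u y (p - y) := by
  have hcone := sub_mem_posTangentConeAt_of_segment_subset
    (segment_midpoint_subset_closedBall_diff_ball hy)
  have hderiv := hu.hasFDerivAt.sub ((hasFDerivAt_gaussianBarrier p α y).const_smul ε)
  have key := hmin.localize.hasFDerivWithinAt_nonneg hderiv.hasFDerivWithinAt hcone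
  have hmid : midpoint ℝ y p - y = (2⁻¹ : ℝ) • (p - y) := by
    rw [midpoint_eq_smul_add, invOf_eq_inv]
    module
  have hinner : ⟪y - p, p - y⟫_ℝ = -R ^ 2 := by
    rw [← neg_sub y p, inner_neg_right, real_inner_self_eq_norm_sq, mem_sphere_iff_norm.1 hy]
  rw [hmid] at key
  simp only [sub_apply, smul_apply, map_smul, innerSL_apply_apply, smul_eq_mul, hinner] at key
  nlinarith [mul_pos (mul_pos hε hα) (mul_pos (gaussianBarrier_pos p α y) (pow_pos hR 2))]

section MaximumPrinciple

variable {E : Type*} [NormedAddCommGroup E] [InnerProductSpace ℝ E] [FiniteDimensional ℝ E]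

lemma IsCompact.exists_isMaxOn_mem_diff_interior {K : Set E} {f : E → ℝ} (hK : IsCompact K)
    (hne : K.Nonempty) (hcont : ContinuousOn f K) (hf : ∀ x ∈ interior K, ContDiffAt ℝ 2 f x)
    (hΔ : ∀ x ∈ interior K, fderiv ℝ f x = 0 → 0 < Δ f x) :
    ∃ x ∈ K \ interior K, IsMaxOn f K x := by
  obtain ⟨x, hxK, hmax⟩ := hK.exists_isMaxOn hne hcont
  refine ⟨x, ⟨hxK, fun hx => ?_⟩, hmax⟩
  have hloc : IsLocalMax f x := hmax.isLocalMax (mem_interior_iff_mem_nhds.mp hx)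
  exact (hΔ x hx hloc.fderiv_eq_zero).not_ge (hloc.laplacian_nonpos (hf x hx))

lemma smul_gaussianBarrier_sub_le_of_sphere {u : E → ℝ} {p : E} {r R L α ε c : ℝ}
    (hr : 0 ≤ r) (hα : 0 < α) (hαL : finrank ℝ E + L * R < 2 * α * r ^ 2) (hL : 0 ≤ L)
    (hε : 0 < ε) (hu : ∀ x ∈ closedBall p R, ContDiffAt ℝ 2 u x)
    (hsub : ∀ x ∈ closedBall p R, Δ u x ≤ L * ‖fderiv ℝ u x‖)
    (hbdry : ∀ x ∈ sphere p R ∪ sphere p r, ε * gaussianBarrier p α x - u x ≤ c) :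
    ∀ x ∈ closedBall p R \ ball p r, ε * gaussianBarrier p α x - u x ≤ c := by
  set A := closedBall p R \ ball p r
  set W := gaussianBarrier p α
  have hAsub : A ⊆ closedBall p R := sdiff_subset
  rcases A.eq_empty_or_nonempty with hA | hA
  · intro x hx
    simp [hA] at hx
  have hW : ∀ x, ContDiffAt ℝ 2 (ε • W) x := fun x =>
    (contDiff_gaussianBarrier p α).contDiffAt.const_smul ε
  have hdiff : ∀ x ∈ closedBall p R, ContDiffAt ℝ 2 (ε • W - u) x := fun x hx =>
    (hW x).sub (hu x hx)
  -- at an interior critical point `∇u = ε ∇W`, hence `Δu ≤ ε L ‖∇W‖ < ε ΔW`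
  have hΔ : ∀ x ∈ interior A, fderiv ℝ (ε • W - u) x = 0 → 0 < Δ (ε • W - u) x := by
    intro x hx hcrit
    have hxA := interior_subset hx
    have hux := hu x (hAsub hxA)
    have hgrad : fderiv ℝ u x = ε • fderiv ℝ W x := by
      rw [fderiv_sub ((hW x).differentiableAt two_ne_zero) (hux.differentiableAt two_ne_zero),
        sub_eq_zero] at hcrit
      rw [← hcrit]
      exact fderiv_const_smul ((contDiff_gaussianBarrier p α).differentiable two_ne_zero x) ε
    have hρ : finrank ℝ E + L * ‖x - p‖ < 2 * α * ‖x - p‖ ^ 2 := by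
      have hρR : ‖x - p‖ ≤ R := mem_closedBall_iff_norm.1 hxA.1
      have hρr : r ≤ ‖x - p‖ := by simpa [dist_eq_norm] using hxA.2
      nlinarith [mul_le_mul_of_nonneg_left hρR hL, pow_le_pow_left₀ hr hρr 2]
    have hlt := mul_norm_fderiv_gaussianBarrier_lt_laplacian p α hα hρ
    rw [(hW x).laplacian_sub hux, laplacian_smul _ (contDiff_gaussianBarrier p α).contDiffAt]
    have := hsub x (hAsub hxA)
    rw [hgrad, norm_smul, Real.norm_of_nonneg hε.le] at this
    simp only [smul_eq_mul, sub_pos]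
    nlinarith
  obtain ⟨x₀, hx₀, hmax⟩ :=
    ((isCompact_closedBall p R).diff isOpen_ball).exists_isMaxOn_mem_diff_interior hA
      (fun x hx => (hdiff x (hAsub hx)).continuousAt.continuousWithinAt)
      (fun x hx => hdiff x (hAsub (interior_subset hx))) hΔ
  exact fun x hx =>
    (hmax hx).trans (hbdry x₀ (closedBall_diff_ball_diff_interior_subset p r R hx₀))

lemma exists_isMinOn_sub_smul_gaussianBarrier {u : E → ℝ} {p y : E} {R L : ℝ} (hR : 0 < R)
    (hL : 0 ≤ L) (hu : ∀ x ∈ closedBall p R, ContDiffAt ℝ 2 u x)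
    (hsub : ∀ x ∈ closedBall p R, Δ u x ≤ L * ‖fderiv ℝ u x‖)
    (hpos : ∀ x ∈ ball p R, 0 < u x) (hnn : ∀ x ∈ sphere p R, 0 ≤ u x) (hy : y ∈ sphere p R)
    (huy : u y = 0) :
    ∃ α ε : ℝ, 0 < α ∧ 0 < ε ∧
      IsMinOn (u - ε • gaussianBarrier p α) (closedBall p R \ ball p (R / 2)) y := by
  have : Nontrivial E := nontrivial_of_ne y p (ne_of_mem_sphere hy hR.ne')
  set r := R / 2 with hr_def
  have hr : 0 < r := by positivity
  have hsph : sphere p r ⊆ ball p R := sphere_subset_ball (by linarith)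
  obtain ⟨xm, hxm, hmin⟩ := (isCompact_sphere p r).exists_isMinOn
    (NormedSpace.sphere_nonempty.2 hr.le) fun x hx =>
      (hu x (ball_subset_closedBall (hsph hx))).continuousAt.continuousWithinAt
  set α := (finrank ℝ E + L * R + 1) / (2 * r ^ 2) with hα_def
  have hα : 0 < α := by positivity
  have hαL : finrank ℝ E + L * R < 2 * α * r ^ 2 := by
    have : 2 * α * r ^ 2 = finrank ℝ E + L * R + 1 := by
      rw [hα_def]
      field_simp
    linarith
  set c := Real.exp (-α * R ^ 2)
  set δ := Real.exp (-α * r ^ 2) - c with hδ_def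
  have hδ : 0 < δ := by
    have : r ^ 2 < R ^ 2 := by rw [hr_def]; nlinarith
    exact sub_pos.2 (Real.exp_lt_exp.2 (by nlinarith))
  -- `ε` makes `ε (gaussianBarrier p α - c)` equal to `min u` on the inner sphere
  set ε := u xm / δ with hε_def
  have hε : 0 < ε := div_pos (hpos xm (hsph hxm)) hδ
  have hbdry : ∀ x ∈ sphere p R ∪ sphere p r, ε * gaussianBarrier p α x - u x ≤ ε * c := by
    rintro x (hx | hx)
    · rw [gaussianBarrier_of_mem_sphere α hx]
      linarith [hnn x hx]
    · have hεδ : ε * δ = u xm := by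
        rw [hε_def]
        field_simp
      have hxm_le : u xm ≤ u x := hmin hx
      rw [gaussianBarrier_of_mem_sphere α hx]
      linear_combination hxm_le + hεδ - ε * hδ_def
  refine ⟨α, ε, hα, hε, fun x hx => ?_⟩
  have := smul_gaussianBarrier_sub_le_of_sphere hr.le hα hαL hL hε hu hsub hbdry x hx
  simp only [mem_ofPred_eq, Pi.sub_apply, Pi.smul_apply, smul_eq_mul, huy,
    gaussianBarrier_of_mem_sphere α hy]
  linarith

theorem hopf_lemma {u : E → ℝ} {p y : E} {R L : ℝ} (hR : 0 < R) (hL : 0 ≤ L)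
    (hu : ∀ x ∈ closedBall p R, ContDiffAt ℝ 2 u x)
    (hsub : ∀ x ∈ closedBall p R, Δ u x ≤ L * ‖fderiv ℝ u x‖)
    (hpos : ∀ x ∈ ball p R, 0 < u x) (hy : y ∈ sphere p R) (huy : u y = 0) :
    0 < fderiv ℝ u y (p - y) := by
  have hnn : ∀ x ∈ sphere p R, 0 ≤ u x := by
    intro x hx
    have hx' : x ∈ closure (ball p R) := by
      rw [closure_ball p hR.ne']
      exact sphere_subset_closedBall hx
    exact continuousWithinAt_const.closure_le hx'
      (hu x (sphere_subset_closedBall hx)).continuousAt.continuousWithinAt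
      fun z hz => (hpos z hz).le
  obtain ⟨α, ε, hα, hε, hmin⟩ :=
    exists_isMinOn_sub_smul_gaussianBarrier hR hL hu hsub hpos hnn hy huy
  exact fderiv_pos_of_isMinOn_sub_smul_gaussianBarrier hR hα hε hy
    ((hu y (sphere_subset_closedBall hy)).differentiableAt two_ne_zero) hmin

theorem isOpen_inter_preimage_zero_of_laplacian_le {Ω : Set E} {u : E → ℝ} (hΩ : IsOpen Ω)
    (hu : ContDiffOn ℝ 2 u Ω) (hnn : ∀ x ∈ Ω, 0 ≤ u x)
    (hsub : ∀ K ⊆ Ω, IsCompact K → ∃ L, 0 ≤ L ∧ ∀ x ∈ K, Δ u x ≤ L * ‖fderiv ℝ u x‖) :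
    IsOpen (Ω ∩ u ⁻¹' {0}) := by
  rw [Metric.isOpen_iff]
  rintro z ⟨hzΩ, hz⟩
  obtain ⟨ε, hε, hzball⟩ := Metric.isOpen_iff.1 hΩ z hzΩ
  refine ⟨ε / 3, by positivity, fun q hq => ?_⟩
  have hB : closedBall z (2 * (ε / 3)) ⊆ Ω := (closedBall_subset_ball (by linarith)).trans hzball
  have hqΩ : q ∈ Ω := hzball (ball_subset_ball (by linarith) hq)
  refine ⟨hqΩ, ?_⟩
  by_contra hq0
  -- the largest ball around `q` on which `u` is positive touches the zero set at some `y`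
  set Z := closedBall z (2 * (ε / 3)) ∩ u ⁻¹' {0}
  have hZ : IsClosed Z := (hu.continuousOn.mono hB).preimage_isClosed_of_isClosed
    isClosed_closedBall isClosed_singleton
  have hzZ : z ∈ Z := ⟨mem_closedBall_self (by positivity), hz⟩
  obtain ⟨y, hyZ, hy⟩ := hZ.exists_infDist_eq_dist ⟨z, hzZ⟩ q
  set R := infDist q Z
  have hR : 0 < R := (hZ.notMem_iff_infDist_pos ⟨z, hzZ⟩).1 fun h => hq0 h.2
  have hRq : R ≤ dist q z := infDist_le_dist_of_mem hzZ
  have hqB : closedBall q R ⊆ closedBall z (2 * (ε / 3)) := fun x hx => by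
    rw [mem_closedBall] at hx ⊢
    linarith [dist_triangle x q z, mem_ball.1 hq]
  have hpos : ∀ x ∈ ball q R, 0 < u x := fun x hx =>
    (hnn x (hB (hqB (ball_subset_closedBall hx)))).lt_of_ne' fun hx0 =>
      ball_infDist_subset_compl hx ⟨hqB (ball_subset_closedBall hx), hx0⟩
  have hyS : y ∈ sphere q R := by rw [mem_sphere, dist_comm, hy]
  obtain ⟨L, hL, hΔ⟩ := hsub _ (hqB.trans hB) (isCompact_closedBall q R)
  have hopf := hopf_lemma hR hL (fun x hx => hu.contDiffAt (hΩ.mem_nhds (hB (hqB hx)))) hΔ hpos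
    hyS hyZ.2
  -- but `y` is an interior minimum of `u ≥ 0`
  have hmin : IsLocalMin u y := by
    filter_upwards [hΩ.mem_nhds (hB hyZ.1)] with x hx
    exact (show u y = 0 from hyZ.2) ▸ hnn x hx
  simp [hmin.fderiv_eq_zero] at hopf

end MaximumPrinciple

lemma exists_le_mul_of_lipschitzOnWith_nhdsGE_zero {g : ℝ → ℝ} (hmono : MonotoneOn g (Ici 0))
    (hg0 : g 0 = 0) (hlip : ∃ K : NNReal, ∃ s ∈ 𝓝[≥] (0 : ℝ), LipschitzOnWith K g s) (M : ℝ) :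
    ∃ L, 0 ≤ L ∧ ∀ t ∈ Icc 0 M, g t ≤ L * t := by
  obtain ⟨K, s, hs, hK⟩ := hlip
  obtain ⟨e, he, hes⟩ := mem_nhdsGE_iff_exists_Icc_subset.1 hs
  refine ⟨K + |g M| / e, by positivity, fun t ⟨ht₀, htM⟩ => ?_⟩
  rcases le_or_gt t e with hte | hte
  · have h := hK.dist_le_mul t (hes ⟨ht₀, hte⟩) 0 (hes ⟨le_rfl, he.le⟩)
    rw [hg0, Real.dist_eq, Real.dist_eq, sub_zero, sub_zero, abs_of_nonneg ht₀] at h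
    nlinarith [le_abs_self (g t), abs_nonneg (g M), div_nonneg (abs_nonneg (g M)) he.le]
  · have hgt : g t ≤ g M := hmono ht₀ (ht₀.trans htM) htM
    have : |g M| ≤ |g M| / e * t := by
      rw [div_mul_eq_mul_div, le_div_iff₀ he]
      exact mul_le_mul_of_nonneg_left hte.le (abs_nonneg _)
    nlinarith [le_abs_self (g M), K.coe_nonneg]

lemma exists_comp_le_mul_of_isCompact {g : ℝ → ℝ} (hmono : MonotoneOn g (Ici 0)) (hg0 : g 0 = 0)
    (hlip : ∃ K : NNReal, ∃ s ∈ 𝓝[≥] (0 : ℝ), LipschitzOnWith K g s)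
    {X : Type*} [TopologicalSpace X] {K : Set X} {φ : X → ℝ} (hK : IsCompact K)
    (hφ : ContinuousOn φ K) (hφ₀ : ∀ x ∈ K, 0 ≤ φ x) :
    ∃ L, 0 ≤ L ∧ ∀ x ∈ K, g (φ x) ≤ L * φ x := by
  obtain ⟨M, hM⟩ := hK.bddAbove_image hφ
  obtain ⟨L, hL, hgL⟩ := exists_le_mul_of_lipschitzOnWith_nhdsGE_zero hmono hg0 hlip M
  exact ⟨L, hL, fun x hx => hgL _ ⟨hφ₀ x hx, hM (mem_image_of_mem φ hx)⟩⟩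

theorem stmt_2_general (N : ℕ) (μ : ℝ) (hμ : μ ∈ Set.Ioc (0:ℝ) (1/4))
    (Ω : Set (EuclideanSpace ℝ (Fin N)))
    (hop : IsOpen Ω) (hconn : IsConnected Ω)
    (g : ℝ → ℝ)
    (hglip : ∀ t ∈ Set.Ici (0:ℝ), ∃ K : NNReal, ∃ s ∈ nhdsWithin t (Set.Ici (0:ℝ)),
      LipschitzOnWith K g s)
    (hgmono : MonotoneOn g (Set.Ici (0:ℝ)))
    (hg0 : g 0 = 0)
    (u : EuclideanSpace ℝ (Fin N) → ℝ)
    (hu : ContDiffOn ℝ 2 u Ω) (hunn : ∀ x ∈ Ω, 0 ≤ u x)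
    (heq : ∀ x ∈ Ω, lap u x + (μ / (infDist x Ωᶜ) ^ 2) * u x = g ‖gradient u x‖)
    (x₀ : EuclideanSpace ℝ (Fin N)) (hx₀ : x₀ ∈ Ω) (hu0 : u x₀ = 0) :
    ∀ x ∈ Ω, u x = 0 := by
  have hΔ : ∀ x ∈ Ω, Δ u x ≤ g ‖fderiv ℝ u x‖ := by
    intro x hx
    have hhardy : 0 ≤ μ / infDist x Ωᶜ ^ 2 * u x :=
      mul_nonneg (div_nonneg hμ.1.le (sq_nonneg _)) (hunn x hx)
    rw [← lap_eq_laplacian (hu.contDiffAt (hop.mem_nhds hx)), ← toDual_gradient,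
      LinearIsometryEquiv.norm_map]
    linarith [heq x hx]
  have hzero : IsOpen (Ω ∩ u ⁻¹' {0}) :=
    isOpen_inter_preimage_zero_of_laplacian_le hop hu hunn fun K hKΩ hK => by
      obtain ⟨L, hL, hgL⟩ := exists_comp_le_mul_of_isCompact hgmono hg0 (hglip 0 self_mem_Ici) hK
        ((hu.continuousOn_fderiv_of_isOpen hop one_le_two).norm.mono hKΩ) fun _ _ => norm_nonneg _
      exact ⟨L, hL, fun x hx => (hΔ x (hKΩ hx)).trans (hgL x hx)⟩
  have hnonzero : IsOpen (Ω ∩ u ⁻¹' {0}ᶜ) :=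
    hu.continuousOn.isOpen_inter_preimage hop isOpen_compl_singleton
  have hΩ : Ω ⊆ Ω ∩ u ⁻¹' {0} :=
    hconn.isPreconnected.subset_left_of_subset_union hzero hnonzero
      (Set.disjoint_left.2 fun _ h₁ h₂ => h₂.2 h₁.2)
      (fun x hx => (em (u x = 0)).imp (fun h => ⟨hx, h⟩) fun h => ⟨hx, h⟩) ⟨x₀, hx₀, hx₀, hu0⟩
  exact fun x hx => (hΩ hx).2

/-- Strong positivity (Lemma 4.4): a nonnegative classical solution of
`Δu + (μ/δ²)u = g(‖∇u‖)` vanishing at a point of a connected domain vanishes identically. -/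
theorem stmt_2 (N : ℕ) (hN : 3 ≤ N) (μ : ℝ) (hμ : μ ∈ Set.Ioc (0:ℝ) (1/4))
    (Ω : Set (EuclideanSpace ℝ (Fin N))) (hne : Ω.Nonempty)
    (hbdd : Bornology.IsBounded Ω) (hop : IsOpen Ω) (hconn : IsConnected Ω)
    (g : ℝ → ℝ)
    (hglip : ∀ t ∈ Set.Ici (0:ℝ), ∃ K : NNReal, ∃ s ∈ nhdsWithin t (Set.Ici (0:ℝ)),
      LipschitzOnWith K g s)
    (hgmono : MonotoneOn g (Set.Ici (0:ℝ)))
    (hgnn : ∀ t ∈ Set.Ici (0:ℝ), 0 ≤ g t)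
    (hg0 : g 0 = 0)
    (u : EuclideanSpace ℝ (Fin N) → ℝ)
    (hu : ContDiffOn ℝ 2 u Ω) (hunn : ∀ x ∈ Ω, 0 ≤ u x)
    (heq : ∀ x ∈ Ω, lap u x + (μ / (infDist x Ωᶜ) ^ 2) * u x = g ‖gradient u x‖)
    (x₀ : EuclideanSpace ℝ (Fin N)) (hx₀ : x₀ ∈ Ω) (hu0 : u x₀ = 0) :
    ∀ x ∈ Ω, u x = 0 :=
  stmt_2_general N μ hμ Ω hop hconn g hglip hgmono hg0 u hu hunn heq x₀ hx₀ hu0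
end

section
/- Let q be a real number with 1 < q < 2. Then for all nonnegative real numbers h₁, h₂, k₁, k₂: (k₁² + k₂²)^{q/2} − (h₁² + h₂²)^{q/2} ≤ (h₁^{q−1} + h₂^{q−1} + k₁^{q−1} + k₂^{q−1})·(|h₁ − k₁| + |h₂ − k₂|). -/
/-!
With `A = √(h₁² + h₂²)` and `B = √(k₁² + k₂²)` the left side is `B ^ q - A ^ q`. Since `q ≤ 2`,
`B ^ q - A ^ q ≤ (B - A) (B ^ (q-1) + A ^ (q-1))` whenever `A ≤ B`; the triangle inequality in
`ℂ ≅ ℝ²` bounds `B - A` by `|h₁ - k₁| + |h₂ - k₂|`, and since `A ≤ h₁ + h₂` and `t ↦ t ^ (q-1)`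
is subadditive, `A ^ (q-1) ≤ h₁ ^ (q-1) + h₂ ^ (q-1)` (likewise for `B`).
-/

open Real

namespace Real

lemma mul_rpow_sub_one_le_of_le {a b q : ℝ} (hb : 0 < b) (hba : b ≤ a) (hq : q ≤ 2) :
    b * a ^ (q - 1) ≤ a * b ^ (q - 1) := by
  have ha : 0 < a := hb.trans_le hba
  have hpow : a ^ (q - 2) ≤ b ^ (q - 2) := rpow_le_rpow_of_nonpos hb hba (by linarith)
  calc b * a ^ (q - 1) = b * a * a ^ (q - 2) := by
        rw [show q - 1 = q - 2 + 1 by ring, rpow_add_one ha.ne']; ring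
    _ ≤ b * a * b ^ (q - 2) := by gcongr
    _ = a * b ^ (q - 1) := by
        rw [show q - 1 = q - 2 + 1 by ring, rpow_add_one hb.ne']; ring

lemma rpow_sub_rpow_le_mul_of_le {a b q : ℝ} (hb : 0 ≤ b) (hba : b ≤ a) (hq : q ≤ 2) :
    a ^ q - b ^ q ≤ (a - b) * (a ^ (q - 1) + b ^ (q - 1)) := by
  -- `x ^ q = x * x ^ (q - 1)` fails at `x = q = 0`, hence the separate case `b = 0`.
  have hself : ∀ {x : ℝ}, 0 < x → x ^ q = x * x ^ (q - 1) := fun hx => by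
    rw [mul_comm, ← rpow_add_one hx.ne']; ring_nf
  rcases hb.eq_or_lt with rfl | hb
  · rcases hba.eq_or_lt with rfl | ha
    · simp
    rw [hself ha, sub_zero, mul_add]
    nlinarith [rpow_nonneg le_rfl q, mul_nonneg ha.le (rpow_nonneg le_rfl (q - 1))]
  rw [hself (hb.trans_le hba), hself hb]
  nlinarith [mul_rpow_sub_one_le_of_le hb hba hq]

lemma rpow_sub_rpow_le_mul {a b q d M : ℝ} (ha : 0 ≤ a) (hb : 0 ≤ b) (hq₀ : 0 ≤ q) (hq : q ≤ 2)
    (hd₀ : 0 ≤ d) (hd : a - b ≤ d) (hM : a ^ (q - 1) + b ^ (q - 1) ≤ M) :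
    a ^ q - b ^ q ≤ M * d := by
  have hM₀ : 0 ≤ M := (add_nonneg (rpow_nonneg ha _) (rpow_nonneg hb _)).trans hM
  rcases le_total a b with hab | hba
  · linarith [rpow_le_rpow ha hab hq₀, mul_nonneg hM₀ hd₀]
  calc a ^ q - b ^ q ≤ (a - b) * (a ^ (q - 1) + b ^ (q - 1)) :=
        rpow_sub_rpow_le_mul_of_le hb hba hq
    _ ≤ d * M := mul_le_mul hd hM (by positivity) hd₀
    _ = M * d := mul_comm d M

lemma sqrt_sq_add_sq_le_abs_add_abs (x y : ℝ) : √(x ^ 2 + y ^ 2) ≤ |x| + |y| := by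
  simpa [Complex.norm_add_mul_I] using Complex.norm_le_abs_re_add_abs_im (x + y * Complex.I)

lemma sqrt_sq_add_sq_rpow_le {x y p : ℝ} (hx : 0 ≤ x) (hy : 0 ≤ y) (hp₀ : 0 ≤ p) (hp : p ≤ 1) :
    √(x ^ 2 + y ^ 2) ^ p ≤ x ^ p + y ^ p :=
  calc √(x ^ 2 + y ^ 2) ^ p ≤ (x + y) ^ p := by
        refine rpow_le_rpow (sqrt_nonneg _) ?_ hp₀
        simpa [abs_of_nonneg hx, abs_of_nonneg hy] using sqrt_sq_add_sq_le_abs_add_abs x y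
    _ ≤ x ^ p + y ^ p := rpow_add_le_add_rpow hx hy hp₀ hp

lemma sqrt_sq_add_sq_sub_sqrt_sq_add_sq_le (h₁ h₂ k₁ k₂ : ℝ) :
    √(k₁ ^ 2 + k₂ ^ 2) - √(h₁ ^ 2 + h₂ ^ 2) ≤ |h₁ - k₁| + |h₂ - k₂| := by
  have htri := norm_sub_norm_le ((k₁ : ℂ) + k₂ * Complex.I) (h₁ + h₂ * Complex.I)
  rw [Complex.norm_add_mul_I, Complex.norm_add_mul_I,
    show ((k₁ : ℂ) + k₂ * Complex.I) - (h₁ + h₂ * Complex.I)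
      = ((k₁ - h₁ : ℝ) : ℂ) + ((k₂ - h₂ : ℝ) : ℂ) * Complex.I by push_cast; ring,
    Complex.norm_add_mul_I] at htri
  rw [abs_sub_comm h₁, abs_sub_comm h₂]
  exact htri.trans (sqrt_sq_add_sq_le_abs_add_abs _ _)

end Real

/-- The algebraic inequality (5.21) used in the uniqueness part of Theorem G. -/
theorem stmt_5 (q : ℝ) (hq1 : 1 < q) (hq2 : q < 2)
    (h₁ h₂ k₁ k₂ : ℝ) (hh₁ : 0 ≤ h₁) (hh₂ : 0 ≤ h₂) (hk₁ : 0 ≤ k₁) (hk₂ : 0 ≤ k₂) :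
    (k₁ ^ 2 + k₂ ^ 2) ^ (q / 2) - (h₁ ^ 2 + h₂ ^ 2) ^ (q / 2)
      ≤ (h₁ ^ (q - 1) + h₂ ^ (q - 1) + k₁ ^ (q - 1) + k₂ ^ (q - 1))
          * (|h₁ - k₁| + |h₂ - k₂|) := by
  rw [rpow_div_two_eq_sqrt q (by positivity), rpow_div_two_eq_sqrt q (by positivity)]
  have hp₀ : 0 ≤ q - 1 := by linarith
  have hp : q - 1 ≤ 1 := by linarith
  refine rpow_sub_rpow_le_mul (sqrt_nonneg _) (sqrt_nonneg _) (by linarith) hq2.le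
    (by positivity) (sqrt_sq_add_sq_sub_sqrt_sq_add_sq_le h₁ h₂ k₁ k₂) ?_
  linarith [sqrt_sq_add_sq_rpow_le hh₁ hh₂ hp₀ hp, sqrt_sq_add_sq_rpow_le hk₁ hk₂ hp₀ hp]
end

section
/- Let N ≥ 2 be an integer, θ > 0, γ a real number with 0 ≤ γ < θN/(N−1), and M > 0. There exists a constant c > 0 depending only on N, θ, γ and M such that for every nonempty open set Ω ⊂ ℝ^N with nonempty complement, every y ∈ ℝ^N and every λ > 0: ∫_{A_{λ}(y)} δ(x)^γ dx ≤ c·λ^{−(N+γ)/(N+θ−1)}, where δ(x) denotes the Euclidean distance from x to the complement of Ω and A_{λ}(y) := {x ∈ Ω : x ≠ y, M·|x−y|^{1−N−θ} > λ and M·|x−y|^{1−N} > λ·δ(x)^{θ}}. -/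
open MeasureTheory Metric Set Module
open scoped ENNReal

/-! On the level set, the first inequality confines `x` to the ball of radius
`R = (M/λ)^(1/(N+θ-1))` about `y`, and the second gives `δ(x)^γ ≤ (M/λ)^(γ/θ) |x-y|^(-β)` with
`β = (N-1)γ/θ`. The hypothesis on `γ` says exactly `β < N`, so `|x-y|^(-β)` is integrable on balls,
and by translation and dilation its integral over `B(y,R)` is a fixed constant times `R^(N-β)`.
The powers of `M/λ` then add up to `(N+γ)/(N+θ-1)`. -/

section NormRpowOnBalls

variable {E : Type*} [NormedAddCommGroup E] [NormedSpace ℝ E] [FiniteDimensional ℝ E]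
  [MeasurableSpace E] [BorelSpace E] (μ : Measure E) [μ.IsAddHaarMeasure]

theorem lintegral_ball_norm_sub_rpow (β : ℝ) (y : E) {R : ℝ} (hR : 0 < R) :
    ∫⁻ x in ball y R, ENNReal.ofReal (‖x - y‖ ^ (-β)) ∂μ =
      ENNReal.ofReal (R ^ ((finrank ℝ E : ℝ) - β)) *
        ∫⁻ x in ball 0 1, ENNReal.ofReal (‖x‖ ^ (-β)) ∂μ := by
  set g : E → ℝ≥0∞ := fun x ↦ ENNReal.ofReal (‖x‖ ^ (-β))
  have hg : Measurable g := by fun_prop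
  have htranslate : ∫⁻ x in ball y R, g (x - y) ∂μ = ∫⁻ x in ball 0 R, g x ∂μ := by
    have hpre : (· - y) ⁻¹' ball (0 : E) R = ball y R := by
      ext x; simp [dist_eq_norm]
    rw [← hpre, (measurePreserving_sub_right μ y).setLIntegral_comp_preimage_emb
      (measurableEmbedding_subRight y)]
  have hdilate : ∫⁻ x in ball 0 R, g x ∂μ =
      ENNReal.ofReal (R ^ finrank ℝ E) * ∫⁻ x in ball 0 1, g (R • x) ∂μ := by
    have hpre : (R • ·) ⁻¹' ball (0 : E) R = ball 0 1 := by
      ext x; simp [norm_smul, abs_of_pos hR, hR]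
    rw [← hpre, ← setLIntegral_map measurableSet_ball hg (measurable_const_smul R),
      Measure.map_addHaar_smul μ hR.ne', Measure.restrict_smul, lintegral_smul_measure,
      abs_of_pos (by positivity), smul_eq_mul, ← mul_assoc, ← ENNReal.ofReal_mul (by positivity),
      mul_inv_cancel₀ (by positivity), ENNReal.ofReal_one, one_mul]
  have hhom : ∀ x : E, g (R • x) = ENNReal.ofReal (R ^ (-β)) * g x := fun x ↦ by
    simp only [g, norm_smul, Real.norm_of_nonneg hR.le, Real.mul_rpow hR.le (norm_nonneg x),
      ENNReal.ofReal_mul (Real.rpow_nonneg hR.le _)]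
  rw [htranslate, hdilate, funext hhom, lintegral_const_mul _ hg, ← mul_assoc,
    ← ENNReal.ofReal_mul (by positivity), ← Real.rpow_natCast, ← Real.rpow_add hR, sub_eq_add_neg]

theorem lintegral_unitBall_norm_rpow_lt_top (hd : 1 ≤ finrank ℝ E) {β : ℝ}
    (hβ : β < finrank ℝ E) : ∫⁻ x in ball (0 : E) 1, ENNReal.ofReal (‖x‖ ^ (-β)) ∂μ < ∞ := by
  refine (integrableOn_ball_of_norm_le_rpow (C := 1) hd hβ (ae_of_all _ fun x ↦ ?_)
    (by fun_prop : Measurable fun x : E ↦ ‖x‖ ^ (-β)).aestronglyMeasurable).lintegral_lt_top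
  rw [one_mul, Real.norm_of_nonneg (Real.rpow_nonneg (norm_nonneg x) _)]

theorem setIntegral_le_of_le_norm_sub_rpow (hd : 1 ≤ finrank ℝ E) {β : ℝ}
    (hβ : β < finrank ℝ E) {f : E → ℝ} (hf_meas : Measurable f) (hf_nonneg : 0 ≤ f)
    {s : Set E} {y : E} {K R : ℝ} (hK : 0 ≤ K) (hR : 0 < R) (hs : s ⊆ ball y R)
    (hfs : ∀ x ∈ s, f x ≤ K * ‖x - y‖ ^ (-β)) :
    ∫ x in s, f x ∂μ ≤ (∫⁻ x in ball (0 : E) 1, ENNReal.ofReal (‖x‖ ^ (-β)) ∂μ).toReal *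
      K * R ^ ((finrank ℝ E : ℝ) - β) := by
  set I := ∫⁻ x in ball (0 : E) 1, ENNReal.ofReal (‖x‖ ^ (-β)) ∂μ
  have hlin : ∫⁻ x in s, ENNReal.ofReal (f x) ∂μ ≤
      ENNReal.ofReal K * (ENNReal.ofReal (R ^ ((finrank ℝ E : ℝ) - β)) * I) :=
    calc ∫⁻ x in s, ENNReal.ofReal (f x) ∂μ
        ≤ ∫⁻ x in s, ENNReal.ofReal K * ENNReal.ofReal (‖x - y‖ ^ (-β)) ∂μ :=
          setLIntegral_mono (by fun_prop) fun x hx ↦ by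
            rw [← ENNReal.ofReal_mul hK]; exact ENNReal.ofReal_le_ofReal (hfs x hx)
      _ ≤ ∫⁻ x in ball y R, ENNReal.ofReal K * ENNReal.ofReal (‖x - y‖ ^ (-β)) ∂μ :=
          lintegral_mono_set hs
      _ = ENNReal.ofReal K * (ENNReal.ofReal (R ^ ((finrank ℝ E : ℝ) - β)) * I) := by
          rw [lintegral_const_mul _ (by fun_prop), lintegral_ball_norm_sub_rpow μ β y hR]
  have hI : I ≠ ∞ := (lintegral_unitBall_norm_rpow_lt_top μ hd hβ).ne
  rw [integral_eq_lintegral_of_nonneg_ae (ae_of_all _ hf_nonneg) hf_meas.aestronglyMeasurable]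
  calc _ ≤ (ENNReal.ofReal K * (ENNReal.ofReal (R ^ ((finrank ℝ E : ℝ) - β)) * I)).toReal :=
        ENNReal.toReal_mono (by finiteness) hlin
    _ = _ := by
        rw [ENNReal.toReal_mul, ENNReal.toReal_mul, ENNReal.toReal_ofReal hK,
          ENNReal.toReal_ofReal (by positivity)]
        ring

end NormRpowOnBalls

theorem lt_rpow_inv_of_lt_mul_rpow_neg {lam M t p : ℝ} (hlam : 0 < lam) (ht : 0 < t)
    (hp : 0 < p) (h : lam < M * t ^ (-p)) : t < (M / lam) ^ p⁻¹ := by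
  have htp : 0 < t ^ p := Real.rpow_pos_of_pos ht p
  rw [Real.rpow_neg ht.le, ← div_eq_mul_inv, lt_div_iff₀ htp] at h
  have hM : 0 < M := (mul_pos hlam htp).trans h
  rw [Real.lt_rpow_inv_iff_of_pos ht.le (div_pos hM hlam).le hp, lt_div_iff₀ hlam, mul_comm]
  exact h

theorem rpow_le_mul_rpow_of_mul_rpow_lt {lam M δ t a θ γ : ℝ} (hlam : 0 < lam) (hδ : 0 ≤ δ)
    (ht : 0 < t) (hθ : 0 < θ) (hγ : 0 ≤ γ) (h : lam * δ ^ θ < M * t ^ (-a)) :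
    δ ^ γ ≤ (M / lam) ^ (γ / θ) * t ^ (-(a * γ / θ)) := by
  have hta : 0 < t ^ (-a) := Real.rpow_pos_of_pos ht _
  have hM : 0 ≤ M / lam := by
    have : 0 < M * t ^ (-a) := (by positivity : 0 ≤ lam * δ ^ θ).trans_lt h
    exact div_nonneg (pos_of_mul_pos_left this hta.le).le hlam.le
  have hδle : δ ≤ (M / lam * t ^ (-a)) ^ θ⁻¹ := by
    rw [Real.le_rpow_inv_iff_of_pos hδ (by positivity) hθ, div_mul_eq_mul_div, le_div_iff₀' hlam]
    exact h.le
  calc δ ^ γ ≤ ((M / lam * t ^ (-a)) ^ θ⁻¹) ^ γ := Real.rpow_le_rpow hδ hδle hγ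
    _ = (M / lam) ^ (γ / θ) * t ^ (-(a * γ / θ)) := by
        rw [← Real.rpow_mul (by positivity), Real.mul_rpow hM hta.le, ← Real.rpow_mul ht.le]
        ring_nf

/-- Step 3 of the proof of Lemma 3.2: the weighted level-set estimate. -/
theorem stmt_7 (N : ℕ) (hN : 2 ≤ N) (θ γ M : ℝ)
    (hθ : 0 < θ) (hγ0 : 0 ≤ γ) (hγ : γ < θ * (N : ℝ) / ((N : ℝ) - 1)) (hM : 0 < M) :
    ∃ c : ℝ, 0 < c ∧
      ∀ Ω : Set (EuclideanSpace ℝ (Fin N)), IsOpen Ω → Ω.Nonempty → Ωᶜ.Nonempty →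
        ∀ (y : EuclideanSpace ℝ (Fin N)) (lam : ℝ), 0 < lam →
          ∫ x in {x | x ∈ Ω ∧ x ≠ y ∧ lam < M * ‖x - y‖ ^ (1 - (N : ℝ) - θ) ∧
              lam * (infDist x Ωᶜ) ^ θ < M * ‖x - y‖ ^ (1 - (N : ℝ))},
            (infDist x Ωᶜ) ^ γ
          ≤ c * lam ^ (-(((N : ℝ) + γ) / ((N : ℝ) + θ - 1))) := by
  have hN' : (2 : ℝ) ≤ N := by exact_mod_cast hN
  have hdim : finrank ℝ (EuclideanSpace ℝ (Fin N)) = N := finrank_euclideanSpace_fin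
  set p : ℝ := N + θ - 1
  have hp : 0 < p := by linarith
  set β : ℝ := (N - 1) * γ / θ
  have hβ : β < N := by
    rw [lt_div_iff₀ (by linarith)] at hγ
    rw [div_lt_iff₀ hθ]
    linarith
  set C := (∫⁻ x in ball (0 : EuclideanSpace ℝ (Fin N)) 1, ENNReal.ofReal (‖x‖ ^ (-β))).toReal
  set e : ℝ := (N + γ) / p
  refine ⟨C * M ^ e + 1, by positivity, fun Ω _ _ _ y lam hlam ↦ ?_⟩
  have hMl : 0 < M / lam := div_pos hM hlam
  set A := {x | x ∈ Ω ∧ x ≠ y ∧ lam < M * ‖x - y‖ ^ (1 - (N : ℝ) - θ) ∧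
    lam * (infDist x Ωᶜ) ^ θ < M * ‖x - y‖ ^ (1 - (N : ℝ))}
  have hbound := setIntegral_le_of_le_norm_sub_rpow volume (by omega) (by rwa [hdim])
    (f := fun x ↦ infDist x Ωᶜ ^ γ) (by fun_prop) (fun x ↦ Real.rpow_nonneg infDist_nonneg γ)
    (s := A)
    (K := (M / lam) ^ (γ / θ)) (R := (M / lam) ^ p⁻¹) (by positivity) (by positivity)
    (fun x ⟨_, hxy, hfar, _⟩ ↦ mem_ball_iff_norm.2 <| lt_rpow_inv_of_lt_mul_rpow_neg hlam
      (norm_sub_pos_iff.2 hxy) hp (by convert hfar using 3; ring))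
    (fun x ⟨_, hxy, _, hnear⟩ ↦ rpow_le_mul_rpow_of_mul_rpow_lt hlam infDist_nonneg
      (norm_sub_pos_iff.2 hxy) hθ hγ0 (by convert hnear using 3; ring))
  rw [hdim] at hbound
  calc _ ≤ C * (M / lam) ^ (γ / θ) * ((M / lam) ^ p⁻¹) ^ ((N : ℝ) - β) := hbound
    _ = C * M ^ e * lam ^ (-e) := by
        have hexp : γ / θ + p⁻¹ * (N - β) = e := by simp only [β, e]; field_simp; ring
        rw [mul_assoc, ← Real.rpow_mul hMl.le, ← Real.rpow_add hMl, hexp,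
          Real.div_rpow hM.le hlam.le, Real.rpow_neg hlam.le, div_eq_mul_inv, mul_assoc]
    _ ≤ (C * M ^ e + 1) * lam ^ (-e) := by gcongr; linarith
end

section
/- Let N ≥ 3 be an integer, μ ∈ (0,1/4], α := 1/2 + √(1/4 − μ), and let q satisfy 1 < q < (N+α)/(N+α−1). For every R₁ > 0 there exists a constant c > 0 depending only on N, μ, q and R₁ such that for every measurable set Ω ⊆ B(0,R₁) ⊂ ℝ^N and every x ∈ Ω with x ≠ 0: ∫_Ω |x−y|^{2−N−2α}·|y|^{α−(N+α−1)q} dy ≤ c·|x|^{2−α−(N+α−1)q}. -/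
/-!
With `p = 2 - N - 2α` and `t = α - (N + α - 1) q`, the hypotheses on `μ` and `q` give
`-N < p`, `-N < t` and `p + t < -N`. Under these conditions the whole-space integral
`F(x) = ∫ ‖x - y‖ ^ p ‖y‖ ^ t dy` is homogeneous of degree `N + p + t` (substitute `y = r • z`),
so it suffices to bound it uniformly on the unit sphere. For `‖u‖ = 1` split the space into
`B(0, 1/2)`, where `‖u - y‖ ≥ 1/2`; `B(u, 1/2)`, where `‖y‖ ≥ 1/2`; and the rest, where
`‖u - y‖ ≥ ‖y‖ / 3`. The three pieces are controlled by the local integrability of `‖y‖ ^ t` and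
`‖y‖ ^ p` and by the integrability of `‖y‖ ^ (p + t)` at infinity.
-/

open MeasureTheory Metric Set Module
open scoped ENNReal

theorem setLIntegral_ball_comp_sub {E : Type*} [NormedAddCommGroup E] [MeasurableSpace E]
    [MeasurableAdd E] (μ : Measure E) [μ.IsAddRightInvariant] (g : E → ℝ≥0∞) (x : E) (ρ : ℝ) :
    ∫⁻ y in ball x ρ, g (y - x) ∂μ = ∫⁻ z in ball 0 ρ, g z ∂μ := by
  have h := (measurePreserving_add_right μ x).setLIntegral_comp_preimage_emb
    (measurableEmbedding_addRight x) (fun y => g (y - x)) (ball x ρ)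
  simpa [preimage_add_right_ball] using h.symm

theorem ofReal_norm_sub_rpow_mul_norm_rpow_le {E : Type*} [NormedAddCommGroup E] {p t : ℝ}
    (hp : p ≤ 0) (ht : t ≤ 0) {u : E} (hu : ‖u‖ = 1) (y : E) :
    ENNReal.ofReal (‖u - y‖ ^ p * ‖y‖ ^ t) ≤
      (ball 0 2⁻¹).indicator (fun y => ENNReal.ofReal (2⁻¹ ^ p) * ENNReal.ofReal (‖y‖ ^ t)) y
      + (ball u 2⁻¹).indicator
          (fun y => ENNReal.ofReal (2⁻¹ ^ t) * ENNReal.ofReal (‖y - u‖ ^ p)) y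
      + (ball 0 2⁻¹)ᶜ.indicator
          (fun y => ENNReal.ofReal (3⁻¹ ^ p) * ENNReal.ofReal (‖y‖ ^ (p + t))) y := by
  have htri : ‖u‖ ≤ ‖y - u‖ + ‖y‖ := by rw [norm_sub_rev]; exact norm_le_norm_sub_add u y
  rw [norm_sub_rev u y]
  by_cases h1 : y ∈ ball 0 2⁻¹
  · rw [indicator_of_mem h1, ← ENNReal.ofReal_mul (by positivity)]
    refine le_add_right (le_add_right (ENNReal.ofReal_le_ofReal ?_))
    rw [mem_ball_zero_iff] at h1
    exact mul_le_mul_of_nonneg_right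
      (Real.rpow_le_rpow_of_nonpos (by norm_num) (by linarith) hp) (by positivity)
  by_cases h2 : y ∈ ball u 2⁻¹
  · rw [indicator_of_mem h2, ← ENNReal.ofReal_mul (by positivity)]
    refine le_add_right (le_add_left (ENNReal.ofReal_le_ofReal ?_))
    rw [mem_ball_zero_iff, not_lt] at h1
    rw [mul_comm]
    exact mul_le_mul_of_nonneg_right
      (Real.rpow_le_rpow_of_nonpos (by norm_num) h1 ht) (by positivity)
  rw [indicator_of_mem (mem_compl h1), ← ENNReal.ofReal_mul (by positivity)]
  refine le_add_left (ENNReal.ofReal_le_ofReal ?_)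
  rw [mem_ball_zero_iff, not_lt] at h1
  rw [mem_ball, dist_eq_norm, not_lt] at h2
  have h3 : ‖y‖ ≤ ‖y - u‖ + ‖u‖ := norm_le_norm_sub_add y u
  calc ‖y - u‖ ^ p * ‖y‖ ^ t ≤ (3⁻¹ * ‖y‖) ^ p * ‖y‖ ^ t :=
        mul_le_mul_of_nonneg_right
          (Real.rpow_le_rpow_of_nonpos (by positivity) (by linarith) hp) (by positivity)
    _ = 3⁻¹ ^ p * ‖y‖ ^ (p + t) := by
        rw [Real.mul_rpow (by norm_num) (norm_nonneg y), mul_assoc,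
          Real.rpow_add ((inv_pos.2 two_pos).trans_le h1)]

section AddHaar

variable {E : Type*} [NormedAddCommGroup E] [NormedSpace ℝ E] [FiniteDimensional ℝ E]
  [MeasurableSpace E] [BorelSpace E] (μ : Measure E) [μ.IsAddHaarMeasure]

theorem setLIntegral_ball_norm_rpow_lt_top [Nontrivial E] {s : ℝ}
    (hs : -(finrank ℝ E : ℝ) < s) (ρ : ℝ) :
    ∫⁻ y in ball 0 ρ, ENNReal.ofReal (‖y‖ ^ s) ∂μ < ⊤ := by
  refine IntegrableOn.setLIntegral_lt_top (integrableOn_ball_of_norm_le_rpow (C := 1) (α := -s)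
    finrank_pos (by linarith) ?_ (measurable_norm.pow_const s).aestronglyMeasurable)
  refine Filter.Eventually.of_forall fun y => ?_
  rw [neg_neg, one_mul, Real.norm_of_nonneg (by positivity)]

theorem setLIntegral_compl_ball_norm_rpow_lt_top {s ρ : ℝ}
    (hs : s < -(finrank ℝ E : ℝ)) (hρ : 0 < ρ) :
    ∫⁻ y in (ball 0 ρ)ᶜ, ENNReal.ofReal (‖y‖ ^ s) ∂μ < ⊤ := by
  have hs0 : s ≤ 0 := by linarith [(finrank ℝ E).cast_nonneg (α := ℝ)]
  have hint := (integrable_one_add_norm (μ := μ) (r := -s) (by linarith)).const_mul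
    ((1 + ρ⁻¹) ^ (-s))
  refine IntegrableOn.setLIntegral_lt_top (hint.integrableOn.mono'
    (measurable_norm.pow_const s).aestronglyMeasurable ?_)
  refine (ae_restrict_iff' measurableSet_ball.compl).2 (Filter.Eventually.of_forall fun y hy => ?_)
  have hy0 : 0 < ‖y‖ := hρ.trans_le (by simpa using hy)
  have hy : 1 + ‖y‖ ≤ (1 + ρ⁻¹) * ‖y‖ := by
    have : 1 ≤ ρ⁻¹ * ‖y‖ := by rw [le_inv_mul_iff₀ hρ]; simpa using hy
    linarith
  rw [neg_neg, Real.norm_of_nonneg (by positivity)]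
  calc ‖y‖ ^ s = (1 + ρ⁻¹) ^ (-s) * ((1 + ρ⁻¹) * ‖y‖) ^ s := by
        rw [Real.mul_rpow (by positivity) hy0.le, ← mul_assoc, ← Real.rpow_add (by positivity),
          neg_add_cancel, Real.rpow_zero, one_mul]
    _ ≤ (1 + ρ⁻¹) ^ (-s) * (1 + ‖y‖) ^ s :=
        mul_le_mul_of_nonneg_left (Real.rpow_le_rpow_of_nonpos (by positivity) hy hs0)
          (by positivity)

noncomputable def normRpowConv (p t : ℝ) (x : E) : ℝ≥0∞ :=
  ∫⁻ y, ENNReal.ofReal (‖x - y‖ ^ p * ‖y‖ ^ t) ∂μ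

theorem normRpowConv_smul (p t : ℝ) (x : E) {r : ℝ} (hr : 0 < r) :
    normRpowConv μ p t (r • x) =
      ENNReal.ofReal (r ^ (finrank ℝ E + p + t)) * normRpowConv μ p t x := by
  have hmeas : Measurable fun y : E => ENNReal.ofReal (‖r • x - y‖ ^ p * ‖y‖ ^ t) := by
    fun_prop
  have hscale := lintegral_map hmeas (measurable_const_smul (M := ℝ) r) (μ := μ)
  rw [Measure.map_addHaar_smul μ hr.ne', lintegral_smul_measure] at hscale
  have hpt : ∀ z : E, ENNReal.ofReal (‖r • x - r • z‖ ^ p * ‖r • z‖ ^ t)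
      = ENNReal.ofReal (r ^ (p + t)) * ENNReal.ofReal (‖x - z‖ ^ p * ‖z‖ ^ t) := fun z => by
    rw [← smul_sub, norm_smul, norm_smul, Real.norm_of_nonneg hr.le,
      Real.mul_rpow hr.le (norm_nonneg _), Real.mul_rpow hr.le (norm_nonneg _),
      ← ENNReal.ofReal_mul (by positivity), Real.rpow_add hr]
    ring_nf
  simp only [hpt, lintegral_const_mul' _ _ ENNReal.ofReal_ne_top, smul_eq_mul] at hscale
  have hinv : ENNReal.ofReal (r ^ finrank ℝ E) * ENNReal.ofReal |(r ^ finrank ℝ E)⁻¹| = 1 := by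
    rw [abs_of_pos (by positivity), ← ENNReal.ofReal_mul (by positivity),
      mul_inv_cancel₀ (by positivity), ENNReal.ofReal_one]
  rw [normRpowConv, normRpowConv, ← one_mul (∫⁻ y, _ ∂μ), ← hinv, mul_assoc, hscale, ← mul_assoc,
    ← ENNReal.ofReal_mul (by positivity), ← Real.rpow_natCast, ← Real.rpow_add hr, add_assoc]

theorem normRpowConv_le_of_norm_eq_one {p t : ℝ} (hp : -(finrank ℝ E : ℝ) < p)
    (ht : -(finrank ℝ E : ℝ) < t) (hpt : p + t < -(finrank ℝ E : ℝ)) :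
    ∃ C, C ≠ ⊤ ∧ ∀ u : E, ‖u‖ = 1 → normRpowConv μ p t u ≤ C := by
  have : Nontrivial E := nontrivial_of_finrank_pos (R := ℝ) (by
    by_contra! h
    have : (finrank ℝ E : ℝ) = 0 := by exact_mod_cast Nat.le_zero.1 h
    linarith)
  refine ⟨ENNReal.ofReal (2⁻¹ ^ p) * ∫⁻ y in ball 0 2⁻¹, ENNReal.ofReal (‖y‖ ^ t) ∂μ
      + ENNReal.ofReal (2⁻¹ ^ t) * ∫⁻ y in ball 0 2⁻¹, ENNReal.ofReal (‖y‖ ^ p) ∂μ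
      + ENNReal.ofReal (3⁻¹ ^ p) * ∫⁻ y in (ball 0 2⁻¹)ᶜ, ENNReal.ofReal (‖y‖ ^ (p + t)) ∂μ,
    ?_, fun u hu => ?_⟩
  · have := setLIntegral_ball_norm_rpow_lt_top μ ht 2⁻¹
    have := setLIntegral_ball_norm_rpow_lt_top μ hp 2⁻¹
    have := setLIntegral_compl_ball_norm_rpow_lt_top μ hpt (inv_pos.2 two_pos)
    finiteness
  calc normRpowConv μ p t u
      ≤ ∫⁻ y, ((ball 0 2⁻¹).indicator
            (fun y => ENNReal.ofReal (2⁻¹ ^ p) * ENNReal.ofReal (‖y‖ ^ t)) y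
          + (ball u 2⁻¹).indicator
            (fun y => ENNReal.ofReal (2⁻¹ ^ t) * ENNReal.ofReal (‖y - u‖ ^ p)) y
          + (ball 0 2⁻¹)ᶜ.indicator
            (fun y => ENNReal.ofReal (3⁻¹ ^ p) * ENNReal.ofReal (‖y‖ ^ (p + t))) y) ∂μ :=
        lintegral_mono fun y => ofReal_norm_sub_rpow_mul_norm_rpow_le (by linarith) (by linarith)
          hu y
    _ = _ := by
        rw [lintegral_add_left (by fun_prop (disch := exact measurableSet_ball)),
          lintegral_add_left (by fun_prop (disch := exact measurableSet_ball)),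
          lintegral_indicator measurableSet_ball, lintegral_indicator measurableSet_ball,
          lintegral_indicator measurableSet_ball.compl,
          lintegral_const_mul' _ _ ENNReal.ofReal_ne_top,
          lintegral_const_mul' _ _ ENNReal.ofReal_ne_top,
          lintegral_const_mul' _ _ ENNReal.ofReal_ne_top,
          setLIntegral_ball_comp_sub μ (fun z => ENNReal.ofReal (‖z‖ ^ p))]

theorem normRpowConv_le {p t : ℝ} (hp : -(finrank ℝ E : ℝ) < p)
    (ht : -(finrank ℝ E : ℝ) < t) (hpt : p + t < -(finrank ℝ E : ℝ)) :
    ∃ C : ℝ, 0 < C ∧ ∀ x : E, x ≠ 0 →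
      normRpowConv μ p t x ≤ ENNReal.ofReal (C * ‖x‖ ^ (finrank ℝ E + p + t)) := by
  obtain ⟨C, hC, hCu⟩ := normRpowConv_le_of_norm_eq_one μ hp ht hpt
  refine ⟨C.toReal + 1, by positivity, fun x hx => ?_⟩
  have hx0 : 0 < ‖x‖ := norm_pos_iff.2 hx
  have hxu : x = ‖x‖ • (‖x‖⁻¹ • x) := by rw [smul_smul, mul_inv_cancel₀ hx0.ne', one_smul]
  have hu : ‖‖x‖⁻¹ • x‖ = 1 := by
    rw [norm_smul, norm_inv, norm_norm, inv_mul_cancel₀ hx0.ne']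
  calc normRpowConv μ p t x
      = ENNReal.ofReal (‖x‖ ^ (finrank ℝ E + p + t)) * normRpowConv μ p t (‖x‖⁻¹ • x) := by
        conv_lhs => rw [hxu]
        exact normRpowConv_smul μ p t _ hx0
    _ ≤ ENNReal.ofReal (‖x‖ ^ (finrank ℝ E + p + t)) * ENNReal.ofReal (C.toReal + 1) := by
        gcongr
        exact (hCu _ hu).trans (ENNReal.le_ofReal_iff_toReal_le hC (by positivity) |>.2
          (le_add_of_nonneg_right zero_le_one))
    _ = ENNReal.ofReal ((C.toReal + 1) * ‖x‖ ^ (finrank ℝ E + p + t)) := by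
        rw [mul_comm, ENNReal.ofReal_mul (by positivity)]

theorem setIntegral_norm_sub_rpow_mul_norm_rpow_le {p t : ℝ} (hp : -(finrank ℝ E : ℝ) < p)
    (ht : -(finrank ℝ E : ℝ) < t) (hpt : p + t < -(finrank ℝ E : ℝ)) :
    ∃ C : ℝ, 0 < C ∧ ∀ (s : Set E) (x : E), x ≠ 0 →
      ∫ y in s, ‖x - y‖ ^ p * ‖y‖ ^ t ∂μ ≤ C * ‖x‖ ^ (finrank ℝ E + p + t) := by
  obtain ⟨C, hC, hCx⟩ := normRpowConv_le μ hp ht hpt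
  refine ⟨C, hC, fun s x hx => ?_⟩
  rw [integral_eq_lintegral_of_nonneg_ae (Filter.Eventually.of_forall fun y => by positivity)
    (by fun_prop)]
  exact ENNReal.toReal_le_of_le_ofReal (by positivity)
    ((setLIntegral_le_lintegral s _).trans (hCx x hx))

end AddHaar

theorem stmt_8_general (N : ℕ) (hN : 3 ≤ N) (μ α q : ℝ)
    (hμ : μ ∈ Set.Ioc (0:ℝ) (1/4)) (hα : α = 1/2 + Real.sqrt (1/4 - μ))
    (hq1 : 1 < q) (hq2 : q < ((N : ℝ) + α) / ((N : ℝ) + α - 1))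
    (R₁ : ℝ) :
    ∃ c : ℝ, 0 < c ∧
      ∀ Ω : Set (EuclideanSpace ℝ (Fin N)), MeasurableSet Ω → Ω ⊆ Metric.ball 0 R₁ →
        ∀ x ∈ Ω, x ≠ 0 →
          ∫ y in Ω, ‖x - y‖ ^ (2 - (N : ℝ) - 2 * α) * ‖y‖ ^ (α - ((N : ℝ) + α - 1) * q)
            ≤ c * ‖x‖ ^ (2 - α - ((N : ℝ) + α - 1) * q) := by
  have hα_ge : 1/2 ≤ α := hα ▸ le_add_of_nonneg_right (Real.sqrt_nonneg _)
  have hα_lt : α < 1 := by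
    have : Real.sqrt (1/4 - μ) < 1/2 := (Real.sqrt_lt' one_half_pos).2 (by linarith [hμ.1])
    linarith
  have hN' : (3 : ℝ) ≤ N := by exact_mod_cast hN
  have hq_lt : q * (N + α - 1) < N + α := (lt_div_iff₀ (by linarith)).1 hq2
  have hq_gt : (N + α - 1 : ℝ) < q * (N + α - 1) := lt_mul_left (by linarith) hq1
  obtain ⟨c, hc, hcx⟩ := setIntegral_norm_sub_rpow_mul_norm_rpow_le
    (volume : Measure (EuclideanSpace ℝ (Fin N))) (p := 2 - N - 2 * α)
    (t := α - (N + α - 1) * q) (by simp only [finrank_euclideanSpace_fin]; linarith)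
    (by simp only [finrank_euclideanSpace_fin]; linarith)
    (by simp only [finrank_euclideanSpace_fin]; linarith)
  refine ⟨c, hc, fun Ω _ _ x _ hx => (hcx Ω x hx).trans_eq ?_⟩
  rw [finrank_euclideanSpace_fin]
  ring_nf

/-- The integral estimate (5.11) from the proof of Theorem F (weak singularities). -/
theorem stmt_8 (N : ℕ) (hN : 3 ≤ N) (μ α q : ℝ)
    (hμ : μ ∈ Set.Ioc (0:ℝ) (1/4)) (hα : α = 1/2 + Real.sqrt (1/4 - μ))
    (hq1 : 1 < q) (hq2 : q < ((N : ℝ) + α) / ((N : ℝ) + α - 1))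
    (R₁ : ℝ) (hR₁ : 0 < R₁) :
    ∃ c : ℝ, 0 < c ∧
      ∀ Ω : Set (EuclideanSpace ℝ (Fin N)), MeasurableSet Ω → Ω ⊆ Metric.ball 0 R₁ →
        ∀ x ∈ Ω, x ≠ 0 →
          ∫ y in Ω, ‖x - y‖ ^ (2 - (N : ℝ) - 2 * α) * ‖y‖ ^ (α - ((N : ℝ) + α - 1) * q)
            ≤ c * ‖x‖ ^ (2 - α - ((N : ℝ) + α - 1) * q) :=
  stmt_8_general N hN μ α q hμ hα hq1 hq2 R₁
end

section
/- Let N ≥ 3 be an integer, μ ∈ (0,1/4], α := 1/2 + √(1/4 − μ), and let q satisfy 1 < q < (N+α)/(N+α−1). For every R₁ > 0 there exists a constant c > 0 depending only on N, μ, q and R₁ such that for every measurable set Ω ⊆ B(0,R₁) ⊂ ℝ^N and every x ∈ Ω with x ≠ 0: ∫_Ω |x−y|^{1−N−α}·|y|^{1−(N+α−1)q} dy ≤ c·|x|^{2−α−(N+α−1)q}. -/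
/-!
Put `ρ = ‖x‖` and split the space into `ball x (ρ/2)`, where `‖y‖ ≥ ρ/2`, the region
`ball 0 (2ρ) \ ball x (ρ/2)`, where `‖x - y‖ ≥ ρ/2`, and the complement of `ball 0 (2ρ)`, where
`‖x - y‖ ≥ ‖y‖/2`. On each piece one factor of `‖x - y‖ ^ a * ‖y‖ ^ b` is bounded by a power of `ρ`
and the other is a radial power, integrated exactly in polar coordinates. Each piece contributes
a constant times `ρ ^ (N + a + b)`, finite as soon as `a, b > -N` (integrability at the two
singularities) and `a + b < -N` (decay at infinity). With `a = 1 - N - α` and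
`b = 1 - (N + α - 1) q` these three conditions are `α < 1`, `q < q_μ` and, since `N ≥ 3`, `q > 1`.
-/

open MeasureTheory Metric Set Module
open scoped ENNReal NNReal

lemma setLIntegral_Ioo_zero_rpow {r p : ℝ} (hr : 0 ≤ r) (hp : -1 < p) :
    ∫⁻ t in Ioo 0 r, ENNReal.ofReal (t ^ p) = ENNReal.ofReal (r ^ (p + 1) / (p + 1)) := by
  have hint : IntegrableOn (fun t : ℝ ↦ t ^ p) (Ioo 0 r) :=
    ((intervalIntegrable_iff_integrableOn_Ioc_of_le hr).1
      (intervalIntegral.intervalIntegrable_rpow' hp)).mono_set Ioo_subset_Ioc_self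
  rw [← ofReal_integral_eq_lintegral_ofReal hint, ← integral_Ioc_eq_integral_Ioo,
    ← intervalIntegral.integral_of_le hr, integral_rpow (Or.inl hp),
    Real.zero_rpow (by linarith), sub_zero]
  filter_upwards [ae_restrict_mem measurableSet_Ioo] with t ht
  exact Real.rpow_nonneg ht.1.le _

lemma setLIntegral_Ioi_rpow {r p : ℝ} (hr : 0 < r) (hp : p < -1) :
    ∫⁻ t in Ioi r, ENNReal.ofReal (t ^ p) = ENNReal.ofReal (-r ^ (p + 1) / (p + 1)) := by
  rw [← ofReal_integral_eq_lintegral_ofReal (integrableOn_Ioi_rpow_of_lt hp hr),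
    integral_Ioi_rpow_of_lt hp hr]
  filter_upwards [ae_restrict_mem measurableSet_Ioi] with t ht
  exact Real.rpow_nonneg (hr.trans ht).le _

namespace MeasureTheory

lemma setLIntegral_ball_norm_sub_rpow {E : Type*} [NormedAddCommGroup E] [MeasurableSpace E]
    [BorelSpace E] (ν : Measure E) [ν.IsAddRightInvariant] (x : E) (r s : ℝ) :
    ∫⁻ y in ball x r, ENNReal.ofReal (‖x - y‖ ^ s) ∂ν =
      ∫⁻ y in ball (0 : E) r, ENNReal.ofReal (‖y‖ ^ s) ∂ν := by
  rw [← lintegral_indicator measurableSet_ball, ← lintegral_indicator measurableSet_ball,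
    ← lintegral_add_right_eq_self _ x]
  congr with y
  simp [indicator, mem_ball, dist_eq_norm]

variable {E : Type*} [NormedAddCommGroup E] [NormedSpace ℝ E] [MeasurableSpace E] [BorelSpace E]
  [FiniteDimensional ℝ E] [Nontrivial E] (ν : Measure E) [ν.IsAddHaarMeasure]

lemma lintegral_fun_norm_addHaar {f : ℝ → ℝ≥0∞} (hf : Measurable f) :
    ∫⁻ x, f ‖x‖ ∂ν =
      ν.toSphere univ * ∫⁻ t in Ioi 0, ENNReal.ofReal (t ^ (finrank ℝ E - 1)) * f t := by
  have hf₂ : Measurable fun p : sphere (0 : E) 1 × Ioi (0 : ℝ) ↦ f p.2 :=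
    hf.comp (measurable_subtype_coe.comp measurable_snd)
  calc ∫⁻ x, f ‖x‖ ∂ν
      = ∫⁻ x : ({(0 : E)}ᶜ : Set E), f ‖x.1‖ ∂(ν.comap (↑)) := by
        rw [lintegral_subtype_comap (measurableSet_singleton _).compl (fun x ↦ f ‖x‖),
          restrict_compl_singleton]
    _ = ∫⁻ p, f p.2 ∂(ν.toSphere.prod (.volumeIoiPow (finrank ℝ E - 1))) := by
        rw [← ν.measurePreserving_homeomorphUnitSphereProd.lintegral_comp hf₂]
        simp
    _ = ν.toSphere univ * ∫⁻ t, f t ∂(Measure.volumeIoiPow (finrank ℝ E - 1)) := by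
        rw [lintegral_prod _ hf₂.aemeasurable]
        simp [lintegral_const, mul_comm]
    _ = _ := by
        rw [Measure.volumeIoiPow, lintegral_withDensity_eq_lintegral_mul _
          (measurable_subtype_coe.pow_const _).ennreal_ofReal
          (show Measurable fun t : Ioi (0 : ℝ) ↦ f t from hf.comp measurable_subtype_coe)]
        exact congrArg _ (lintegral_subtype_comap measurableSet_Ioi
          fun t ↦ ENNReal.ofReal (t ^ (finrank ℝ E - 1)) * f t)

lemma setLIntegral_preimage_norm_addHaar {f : ℝ → ℝ≥0∞} (hf : Measurable f) {S : Set ℝ}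
    (hS : MeasurableSet S) :
    ∫⁻ x in (‖·‖) ⁻¹' S, f ‖x‖ ∂ν =
      ν.toSphere univ * ∫⁻ t in S ∩ Ioi 0, ENNReal.ofReal (t ^ (finrank ℝ E - 1)) * f t := by
  have hind : ((‖·‖) ⁻¹' S).indicator (fun x : E ↦ f ‖x‖) = fun x ↦ S.indicator f ‖x‖ :=
    funext fun x ↦ indicator_comp_right (‖·‖) (g := f)
  rw [← lintegral_indicator (measurable_norm hS), hind,
    lintegral_fun_norm_addHaar ν (hf.indicator hS), ← Measure.restrict_restrict hS,
    ← lintegral_indicator hS]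
  simp_rw [indicator_mul_right]

lemma setLIntegral_preimage_norm_rpow {S : Set ℝ} (hS : MeasurableSet S) (s : ℝ) :
    ∫⁻ x in (‖·‖) ⁻¹' S, ENNReal.ofReal (‖x‖ ^ s) ∂ν =
      ν.toSphere univ * ∫⁻ t in S ∩ Ioi 0, ENNReal.ofReal (t ^ ((finrank ℝ E : ℝ) + s - 1)) := by
  rw [setLIntegral_preimage_norm_addHaar ν (f := fun t ↦ ENNReal.ofReal (t ^ s)) (by fun_prop)
    hS]
  refine congrArg _ (setLIntegral_congr_fun (hS.inter measurableSet_Ioi) fun t ht ↦ ?_)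
  rw [← ENNReal.ofReal_mul (pow_pos ht.2 _).le, ← Real.rpow_natCast, Nat.cast_pred finrank_pos,
    ← Real.rpow_add ht.2, sub_add_eq_add_sub]

lemma setLIntegral_ball_zero_norm_rpow {r s : ℝ} (hr : 0 ≤ r) (hs : -(finrank ℝ E : ℝ) < s) :
    ∫⁻ x in ball (0 : E) r, ENNReal.ofReal (‖x‖ ^ s) ∂ν =
      ENNReal.ofReal (ν.toSphere.real univ * (r ^ (finrank ℝ E + s) / (finrank ℝ E + s))) := by
  have hball : ball (0 : E) r = (‖·‖) ⁻¹' Iio r := by ext; simp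
  rw [hball, setLIntegral_preimage_norm_rpow ν measurableSet_Iio, Iio_inter_Ioi,
    setLIntegral_Ioo_zero_rpow hr (by linarith), sub_add_cancel,
    ENNReal.ofReal_mul measureReal_nonneg, ofReal_measureReal]

lemma setLIntegral_compl_ball_zero_norm_rpow {r s : ℝ} (hr : 0 < r) (hs : s < -(finrank ℝ E : ℝ)) :
    ∫⁻ x in (ball (0 : E) r)ᶜ, ENNReal.ofReal (‖x‖ ^ s) ∂ν =
      ENNReal.ofReal (ν.toSphere.real univ * (-r ^ (finrank ℝ E + s) / (finrank ℝ E + s))) := by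
  have hball : (ball (0 : E) r)ᶜ = (‖·‖) ⁻¹' Ici r := by ext; simp
  rw [hball, setLIntegral_preimage_norm_rpow ν measurableSet_Ici,
    inter_eq_left.2 (Ici_subset_Ioi.2 hr), Measure.restrict_congr_set Ioi_ae_eq_Ici.symm,
    setLIntegral_Ioi_rpow hr (by linarith), sub_add_cancel,
    ENNReal.ofReal_mul measureReal_nonneg, ofReal_measureReal]

variable {ν} in
lemma setLIntegral_ball_half_norm_sub_rpow_mul_norm_rpow_le {a b : ℝ}
    (ha : -(finrank ℝ E : ℝ) < a) (hb : b ≤ 0) :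
    ∃ k : ℝ≥0, ∀ x : E, x ≠ 0 →
      ∫⁻ y in ball x (‖x‖ / 2), ENNReal.ofReal (‖x - y‖ ^ a * ‖y‖ ^ b) ∂ν ≤
        k * ENNReal.ofReal (‖x‖ ^ (finrank ℝ E + a + b)) := by
  set n : ℝ := (finrank ℝ E : ℝ)
  have hna : 0 < n + a := by linarith
  refine ⟨(ν.toSphere.real univ / (n + a) / 2 ^ (n + a + b)).toNNReal, fun x hx ↦ ?_⟩
  have hρ : 0 < ‖x‖ / 2 := by positivity
  calc ∫⁻ y in ball x (‖x‖ / 2), ENNReal.ofReal (‖x - y‖ ^ a * ‖y‖ ^ b) ∂ν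
      ≤ ∫⁻ y in ball x (‖x‖ / 2),
          ENNReal.ofReal ((‖x‖ / 2) ^ b) * ENNReal.ofReal (‖x - y‖ ^ a) ∂ν := by
        refine setLIntegral_mono' measurableSet_ball fun y hy ↦ ?_
        have hy' : ‖x‖ / 2 ≤ ‖y‖ := by
          have := norm_sub_norm_le x y
          rw [mem_ball, dist_eq_norm, norm_sub_rev] at hy
          linarith
        rw [← ENNReal.ofReal_mul (by positivity), mul_comm]
        exact ENNReal.ofReal_le_ofReal (mul_le_mul_of_nonneg_right
          (Real.rpow_le_rpow_of_nonpos hρ hy' hb) (by positivity))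
    _ = ENNReal.ofReal
          ((‖x‖ / 2) ^ b * (ν.toSphere.real univ * ((‖x‖ / 2) ^ (n + a) / (n + a)))) := by
        rw [lintegral_const_mul' _ _ ENNReal.ofReal_ne_top, setLIntegral_ball_norm_sub_rpow,
          setLIntegral_ball_zero_norm_rpow ν hρ.le ha, ← ENNReal.ofReal_mul (by positivity)]
    _ = _ := by
        change _ = ENNReal.ofReal _ * _
        rw [← ENNReal.ofReal_mul (by positivity)]
        congr 1
        have hx' : 0 < ‖x‖ := norm_pos_iff.2 hx
        simp only [Real.div_rpow hx'.le zero_le_two, Real.rpow_add hx', Real.rpow_add two_pos]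
        field_simp

variable {ν} in
lemma setLIntegral_ball_two_diff_norm_sub_rpow_mul_norm_rpow_le {a b : ℝ} (ha : a ≤ 0)
    (hb : -(finrank ℝ E : ℝ) < b) :
    ∃ k : ℝ≥0, ∀ x : E, x ≠ 0 →
      ∫⁻ y in ball 0 (2 * ‖x‖) \ ball x (‖x‖ / 2), ENNReal.ofReal (‖x - y‖ ^ a * ‖y‖ ^ b) ∂ν ≤
        k * ENNReal.ofReal (‖x‖ ^ (finrank ℝ E + a + b)) := by
  set n : ℝ := (finrank ℝ E : ℝ)
  have hnb : 0 < n + b := by linarith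
  refine ⟨(ν.toSphere.real univ / (n + b) * 2 ^ (n + b) / 2 ^ a).toNNReal, fun x hx ↦ ?_⟩
  have hx' : 0 < ‖x‖ := norm_pos_iff.2 hx
  have hρ : 0 < ‖x‖ / 2 := by positivity
  calc ∫⁻ y in ball 0 (2 * ‖x‖) \ ball x (‖x‖ / 2), ENNReal.ofReal (‖x - y‖ ^ a * ‖y‖ ^ b) ∂ν
      ≤ ∫⁻ y in ball 0 (2 * ‖x‖) \ ball x (‖x‖ / 2),
          ENNReal.ofReal ((‖x‖ / 2) ^ a) * ENNReal.ofReal (‖y‖ ^ b) ∂ν := by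
        refine setLIntegral_mono' (measurableSet_ball.diff measurableSet_ball) fun y hy ↦ ?_
        have hy' : ‖x‖ / 2 ≤ ‖x - y‖ := by
          simpa [mem_ball, dist_eq_norm, norm_sub_rev] using hy.2
        rw [← ENNReal.ofReal_mul (by positivity)]
        exact ENNReal.ofReal_le_ofReal (mul_le_mul_of_nonneg_right
          (Real.rpow_le_rpow_of_nonpos hρ hy' ha) (by positivity))
    _ ≤ ∫⁻ y in ball 0 (2 * ‖x‖), ENNReal.ofReal ((‖x‖ / 2) ^ a) * ENNReal.ofReal (‖y‖ ^ b) ∂ν :=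
        lintegral_mono_set sdiff_subset
    _ = ENNReal.ofReal
          ((‖x‖ / 2) ^ a * (ν.toSphere.real univ * ((2 * ‖x‖) ^ (n + b) / (n + b)))) := by
        rw [lintegral_const_mul' _ _ ENNReal.ofReal_ne_top,
          setLIntegral_ball_zero_norm_rpow ν (by positivity) hb,
          ← ENNReal.ofReal_mul (by positivity)]
    _ = _ := by
        change _ = ENNReal.ofReal _ * _
        rw [← ENNReal.ofReal_mul (by positivity)]
        congr 1
        simp only [Real.div_rpow hx'.le zero_le_two, Real.mul_rpow zero_le_two hx'.le,
          Real.rpow_add hx']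
        field_simp

variable {ν} in
lemma setLIntegral_compl_ball_two_norm_sub_rpow_mul_norm_rpow_le {a b : ℝ} (ha : a ≤ 0)
    (hab : a + b < -(finrank ℝ E : ℝ)) :
    ∃ k : ℝ≥0, ∀ x : E, x ≠ 0 →
      ∫⁻ y in (ball 0 (2 * ‖x‖))ᶜ, ENNReal.ofReal (‖x - y‖ ^ a * ‖y‖ ^ b) ∂ν ≤
        k * ENNReal.ofReal (‖x‖ ^ (finrank ℝ E + a + b)) := by
  set n : ℝ := (finrank ℝ E : ℝ)
  have hnab : n + (a + b) < 0 := by linarith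
  refine ⟨(-ν.toSphere.real univ / (n + (a + b)) * 2 ^ (n + (a + b)) / 2 ^ a).toNNReal,
    fun x hx ↦ ?_⟩
  have hx' : 0 < ‖x‖ := norm_pos_iff.2 hx
  calc ∫⁻ y in (ball 0 (2 * ‖x‖))ᶜ, ENNReal.ofReal (‖x - y‖ ^ a * ‖y‖ ^ b) ∂ν
      ≤ ∫⁻ y in (ball 0 (2 * ‖x‖))ᶜ,
          ENNReal.ofReal ((2 ^ a)⁻¹) * ENNReal.ofReal (‖y‖ ^ (a + b)) ∂ν := by
        refine setLIntegral_mono' measurableSet_ball.compl fun y hy ↦ ?_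
        have hy₁ : 2 * ‖x‖ ≤ ‖y‖ := by simpa using hy
        have hy₂ : ‖y‖ / 2 ≤ ‖x - y‖ := by
          have := norm_sub_norm_le y x
          rw [norm_sub_rev] at this
          linarith
        have hy₀ : 0 < ‖y‖ / 2 := by linarith
        rw [← ENNReal.ofReal_mul (by positivity), Real.rpow_add (by linarith), ← mul_assoc,
          inv_mul_eq_div, ← Real.div_rpow (norm_nonneg y) zero_le_two]
        exact ENNReal.ofReal_le_ofReal (mul_le_mul_of_nonneg_right
          (Real.rpow_le_rpow_of_nonpos hy₀ hy₂ ha) (by positivity))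
    _ = ENNReal.ofReal ((2 ^ a)⁻¹ *
          (ν.toSphere.real univ * (-(2 * ‖x‖) ^ (n + (a + b)) / (n + (a + b))))) := by
        rw [lintegral_const_mul' _ _ ENNReal.ofReal_ne_top,
          setLIntegral_compl_ball_zero_norm_rpow ν (by positivity) hab,
          ← ENNReal.ofReal_mul (by positivity)]
    _ = _ := by
        change _ = ENNReal.ofReal _ * _
        rw [← ENNReal.ofReal_mul (div_nonneg (mul_nonneg (div_nonneg_of_nonpos
          (neg_nonpos.2 measureReal_nonneg) hnab.le) (by positivity)) (by positivity))]
        congr 1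
        rw [Real.mul_rpow zero_le_two hx'.le, ← add_assoc]
        field_simp

theorem lintegral_norm_sub_rpow_mul_norm_rpow_le {a b : ℝ} (ha : -(finrank ℝ E : ℝ) < a)
    (hb : -(finrank ℝ E : ℝ) < b) (hab : a + b < -(finrank ℝ E : ℝ)) :
    ∃ C : ℝ≥0, ∀ x : E, x ≠ 0 →
      ∫⁻ y, ENNReal.ofReal (‖x - y‖ ^ a * ‖y‖ ^ b) ∂ν ≤
        C * ENNReal.ofReal (‖x‖ ^ (finrank ℝ E + a + b)) := by
  obtain ⟨k₁, hk₁⟩ := setLIntegral_ball_half_norm_sub_rpow_mul_norm_rpow_le (ν := ν) (b := b)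
    ha (by linarith)
  obtain ⟨k₂, hk₂⟩ := setLIntegral_ball_two_diff_norm_sub_rpow_mul_norm_rpow_le (ν := ν) (a := a)
    (by linarith) hb
  obtain ⟨k₃, hk₃⟩ := setLIntegral_compl_ball_two_norm_sub_rpow_mul_norm_rpow_le (ν := ν)
    (by linarith) hab
  refine ⟨k₁ + k₂ + k₃, fun x hx ↦ ?_⟩
  have hcover : univ ⊆ ball x (‖x‖ / 2) ∪ (ball 0 (2 * ‖x‖) \ ball x (‖x‖ / 2)) ∪
      (ball 0 (2 * ‖x‖))ᶜ := fun y _ ↦ by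
    by_cases h₁ : y ∈ ball x (‖x‖ / 2) <;> by_cases h₂ : y ∈ ball (0 : E) (2 * ‖x‖) <;> simp [*]
  calc ∫⁻ y, ENNReal.ofReal (‖x - y‖ ^ a * ‖y‖ ^ b) ∂ν
      ≤ ∫⁻ y in ball x (‖x‖ / 2) ∪ (ball 0 (2 * ‖x‖) \ ball x (‖x‖ / 2)) ∪
          (ball 0 (2 * ‖x‖))ᶜ, ENNReal.ofReal (‖x - y‖ ^ a * ‖y‖ ^ b) ∂ν := by
        rw [← setLIntegral_univ]; exact lintegral_mono_set hcover
    _ ≤ _ := (lintegral_union_le _ _ _).trans (add_le_add_left (lintegral_union_le _ _ _) _)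
    _ ≤ _ := add_le_add (add_le_add (hk₁ x hx) (hk₂ x hx)) (hk₃ x hx)
    _ = _ := by push_cast; ring

end MeasureTheory

open MeasureTheory

theorem stmt_9_general (N : ℕ) (hN : 3 ≤ N) (μ α q : ℝ)
    (hμ : μ ∈ Set.Ioc (0:ℝ) (1/4)) (hα : α = 1/2 + Real.sqrt (1/4 - μ))
    (hq1 : 1 < q) (hq2 : q < ((N : ℝ) + α) / ((N : ℝ) + α - 1))
    (R₁ : ℝ) :
    ∃ c : ℝ, 0 < c ∧
      ∀ Ω : Set (EuclideanSpace ℝ (Fin N)), MeasurableSet Ω → Ω ⊆ Metric.ball 0 R₁ →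
        ∀ x ∈ Ω, x ≠ 0 →
          ∫ y in Ω, ‖x - y‖ ^ (1 - (N : ℝ) - α) * ‖y‖ ^ (1 - ((N : ℝ) + α - 1) * q)
            ≤ c * ‖x‖ ^ (2 - α - ((N : ℝ) + α - 1) * q) := by
  have hα₀ : 1 / 2 ≤ α := hα ▸ le_add_of_nonneg_right (Real.sqrt_nonneg _)
  have hα₁ : α < 1 := by
    have : Real.sqrt (1 / 4 - μ) < 1 / 2 := (Real.sqrt_lt' one_half_pos).2 (by linarith [hμ.1])
    linarith
  have hN' : (3 : ℝ) ≤ N := by exact_mod_cast hN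
  have hq : q * ((N : ℝ) + α - 1) < N + α := (lt_div_iff₀ (by linarith)).1 hq2
  have : Nontrivial (EuclideanSpace ℝ (Fin N)) :=
    Module.nontrivial_of_finrank_pos (R := ℝ) (by rw [finrank_euclideanSpace_fin]; omega)
  obtain ⟨C, hC⟩ := lintegral_norm_sub_rpow_mul_norm_rpow_le
    (volume : Measure (EuclideanSpace ℝ (Fin N))) (a := 1 - N - α)
    (b := 1 - (N + α - 1) * q) (by rw [finrank_euclideanSpace_fin]; linarith)
    (by rw [finrank_euclideanSpace_fin]; linarith) (by rw [finrank_euclideanSpace_fin]; nlinarith)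
  refine ⟨C + 1, by positivity, fun Ω _ _ x _ hx ↦ ?_⟩
  have hCx := hC x hx
  rw [finrank_euclideanSpace_fin, ← ENNReal.ofReal_coe_nnreal, ← ENNReal.ofReal_mul C.coe_nonneg,
    show (N : ℝ) + (1 - N - α) + (1 - (N + α - 1) * q) = 2 - α - (N + α - 1) * q by ring] at hCx
  calc ∫ y in Ω, ‖x - y‖ ^ (1 - (N : ℝ) - α) * ‖y‖ ^ (1 - ((N : ℝ) + α - 1) * q)
      = (∫⁻ y in Ω, ENNReal.ofReal
          (‖x - y‖ ^ (1 - (N : ℝ) - α) * ‖y‖ ^ (1 - ((N : ℝ) + α - 1) * q))).toReal :=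
        integral_eq_lintegral_of_nonneg_ae (ae_of_all _ fun _ ↦ by positivity) (by fun_prop)
    _ ≤ C * ‖x‖ ^ (2 - α - ((N : ℝ) + α - 1) * q) :=
        ENNReal.toReal_le_of_le_ofReal (by positivity) ((setLIntegral_le_lintegral _ _).trans hCx)
    _ ≤ (C + 1) * ‖x‖ ^ (2 - α - ((N : ℝ) + α - 1) * q) := by gcongr; linarith

/-- The integral estimate underlying (5.22) (bound for `N(x)`) in Case 2 of the proof of
Theorem F (weak singularities). -/
theorem stmt_9 (N : ℕ) (hN : 3 ≤ N) (μ α q : ℝ)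
    (hμ : μ ∈ Set.Ioc (0:ℝ) (1/4)) (hα : α = 1/2 + Real.sqrt (1/4 - μ))
    (hq1 : 1 < q) (hq2 : q < ((N : ℝ) + α) / ((N : ℝ) + α - 1))
    (R₁ : ℝ) (hR₁ : 0 < R₁) :
    ∃ c : ℝ, 0 < c ∧
      ∀ Ω : Set (EuclideanSpace ℝ (Fin N)), MeasurableSet Ω → Ω ⊆ Metric.ball 0 R₁ →
        ∀ x ∈ Ω, x ≠ 0 →
          ∫ y in Ω, ‖x - y‖ ^ (1 - (N : ℝ) - α) * ‖y‖ ^ (1 - ((N : ℝ) + α - 1) * q)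
            ≤ c * ‖x‖ ^ (2 - α - ((N : ℝ) + α - 1) * q) :=
  stmt_9_general N hN μ α q hμ hα hq1 hq2 R₁
end

section
/- Let N ≥ 3 be an integer, μ ∈ (0,1/4], α := 1/2 + √(1/4 − μ), and let q satisfy 1 < q < (N+α)/(N+α−1). Set κ_μ := α(N+α−2), ℓ_{N,q} := ((2−q)/(q−1))·(q/(q−1) − N), and note that ℓ_{N,q} > κ_μ; set γ₁ := ((ℓ_{N,q} − κ_μ)/α^q)^{1/(q−1)}. Then the function ū(x) := γ₁·x_N^{α}·|x|^{−(2−q)/(q−1)−α} satisfies Δū(x) + (μ/x_N²)·ū(x) ≤ ‖∇ū(x)‖^q for every x ∈ ℝ^N with x_N > 0. -/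
open MeasureTheory Metric Set

/-- The last coordinate index of `Fin N`. -/
def lastIdx (N : ℕ) (h : 0 < N) : Fin N := ⟨N - 1, by omega⟩

/-! Write `u = c y_N^α ‖y‖^b` with `b = -(2-q)/(q-1) - α`. Then
`Δu = c (α(α-1) y_N^(α-2) ‖y‖^b + b(2α+b+N-2) y_N^α ‖y‖^(b-2))`; the Hardy term cancels the
first summand because `α(α-1) + μ = 0`, and `b(2α+b+N-2) = ℓ_{N,q} - κ_μ`. The gradient is
`c (α y_N^(α-1) ‖y‖^b e_N + b y_N^α ‖y‖^(b-2) y)`, whose norm dominates its `e_N`-part since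
`b(2α+b) ≥ 0`, which is where `q < (N+α)/(N+α-1)` enters. By the choice of `γ₁` the `q`-th power
of that part is `c (ℓ_{N,q} - κ_μ) y_N^((α-1)q) ‖y‖^(bq)`: this has the homogeneity of
`y_N^α ‖y‖^(b-2)` with a smaller power of `y_N`, so it is the larger one as `y_N ≤ ‖y‖`. -/

theorem hasFDerivAt_norm_rpow_of_ne_zero {F : Type*} [NormedAddCommGroup F]
    [InnerProductSpace ℝ F] {x : F} (hx : x ≠ 0) (p : ℝ) :
    HasFDerivAt (fun y : F => ‖y‖ ^ p) ((p * ‖x‖ ^ (p - 2)) • innerSL ℝ x) x := by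
  have hx' : 0 < ‖x‖ := norm_pos_iff.mpr hx
  have h := ((hasFDerivAt_id x).norm_sq).rpow_const (p := p / 2) (Or.inl (by positivity))
  have hpow : ∀ y : F, (‖y‖ ^ 2) ^ (p / 2) = ‖y‖ ^ p := fun y => by
    rw [← Real.rpow_natCast, ← Real.rpow_mul (norm_nonneg y)]
    congr 1; push_cast; ring
  simp only [id, hpow] at h
  refine h.congr_fderiv ?_
  ext v
  rw [← Real.rpow_natCast, ← Real.rpow_mul hx'.le, show ((2 : ℕ) : ℝ) * (p / 2 - 1) = p - 2 by
    push_cast; ring]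
  simp only [smul_apply, ContinuousLinearMap.comp_apply, smul_eq_mul,
    nsmul_eq_mul, ContinuousLinearMap.id_apply]
  push_cast
  ring

theorem fderiv_const_mul_field {E : Type*} [NormedAddCommGroup E] [NormedSpace ℝ E]
    (c : ℝ) (f : E → ℝ) : fderiv ℝ (fun y => c * f y) = c • fderiv ℝ f :=
  fderiv_const_smul_field (f := f) c

theorem lap_const_mul {N : ℕ} (c : ℝ) (u : EuclideanSpace ℝ (Fin N) → ℝ)
    (x : EuclideanSpace ℝ (Fin N)) : lap (fun y => c * u y) x = c * lap u x := by
  simp only [lap, fderiv_const_mul_field, smul_apply, Pi.smul_apply,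
    smul_eq_mul, Finset.mul_sum]

theorem gradient_const_mul {F : Type*} [NormedAddCommGroup F] [InnerProductSpace ℝ F]
    [CompleteSpace F] (c : ℝ) (f : F → ℝ) (x : F) :
    gradient (fun y => c * f y) x = c • gradient f x := by
  simp only [gradient, fderiv_const_mul_field, Pi.smul_apply, map_smul]

section CoordNormPow

variable {N : ℕ}

noncomputable def coordNormPow (n : Fin N) (a b : ℝ) (y : EuclideanSpace ℝ (Fin N)) : ℝ :=
  y n ^ a * ‖y‖ ^ b

variable {n : Fin N} {x : EuclideanSpace ℝ (Fin N)}

theorem ne_zero_of_coord_pos (hx : 0 < x n) : x ≠ 0 := by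
  rintro rfl
  simp at hx

theorem coordNormPow_pos (hx : 0 < x n) (a b : ℝ) : 0 < coordNormPow n a b x :=
  mul_pos (Real.rpow_pos_of_pos hx a)
    (Real.rpow_pos_of_pos (norm_pos_iff.mpr (ne_zero_of_coord_pos hx)) b)

theorem coord_mul_coordNormPow (hx : 0 < x n) (a b : ℝ) :
    x n * coordNormPow n (a - 1) b x = coordNormPow n a b x := by
  unfold coordNormPow
  rw [Real.rpow_sub hx, Real.rpow_one]
  field_simp

theorem norm_sq_mul_coordNormPow (hx : 0 < x n) (a b : ℝ) :
    ‖x‖ ^ 2 * coordNormPow n a (b - 2) x = coordNormPow n a b x := by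
  have hR : 0 < ‖x‖ := norm_pos_iff.mpr (ne_zero_of_coord_pos hx)
  unfold coordNormPow
  rw [Real.rpow_sub hR, Real.rpow_two]
  field_simp

theorem coordNormPow_rpow (hx : 0 < x n) (a b q : ℝ) :
    coordNormPow n a b x ^ q = coordNormPow n (a * q) (b * q) x := by
  rw [coordNormPow, Real.mul_rpow (Real.rpow_nonneg hx.le a) (Real.rpow_nonneg (norm_nonneg x) b),
    ← Real.rpow_mul hx.le, ← Real.rpow_mul (norm_nonneg x), coordNormPow]

theorem coordNormPow_le_of_add_eq (hx : 0 < x n) {a b a' b' : ℝ} (ha : a' ≤ a)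
    (hdeg : a + b = a' + b') : coordNormPow n a b x ≤ coordNormPow n a' b' x := by
  have hXR : x n ≤ ‖x‖ := (le_abs_self _).trans (PiLp.norm_apply_le x n)
  calc coordNormPow n a b x = x n ^ a' * (x n ^ (a - a') * ‖x‖ ^ b) := by
        rw [coordNormPow, ← mul_assoc, ← Real.rpow_add hx]; ring_nf
    _ ≤ x n ^ a' * (‖x‖ ^ (a - a') * ‖x‖ ^ b) := by gcongr
    _ = coordNormPow n a' b' x := by
        rw [coordNormPow, ← Real.rpow_add (hx.trans_le hXR)]
        congr 2
        linarith

theorem hasFDerivAt_coordNormPow (hx : 0 < x n) (a b : ℝ) :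
    HasFDerivAt (coordNormPow n a b)
      ((a * coordNormPow n (a - 1) b x) • EuclideanSpace.proj (𝕜 := ℝ) n
        + (b * coordNormPow n a (b - 2) x) • innerSL ℝ x) x := by
  have h := ((EuclideanSpace.proj (𝕜 := ℝ) n).hasFDerivAt.rpow_const (p := a)
    (Or.inl hx.ne')).mul (hasFDerivAt_norm_rpow_of_ne_zero (ne_zero_of_coord_pos hx) b)
  refine h.congr_fderiv ?_
  ext v
  simp only [coordNormPow, add_apply, smul_apply, smul_eq_mul, PiLp.proj_apply]
  ring

theorem fderiv_coordNormPow_apply (hx : 0 < x n) (a b : ℝ) (v : EuclideanSpace ℝ (Fin N)) :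
    fderiv ℝ (coordNormPow n a b) x v
      = a * v n * coordNormPow n (a - 1) b x + b * inner ℝ x v * coordNormPow n a (b - 2) x := by
  rw [(hasFDerivAt_coordNormPow hx a b).fderiv]
  simp only [add_apply, smul_apply, smul_eq_mul, PiLp.proj_apply, innerSL_apply_apply]
  ring

theorem fderiv_coordNormPow_single_eventuallyEq (hx : 0 < x n) (a b : ℝ) (i : Fin N) :
    (fun y => fderiv ℝ (coordNormPow n a b) y (EuclideanSpace.single i 1)) =ᶠ[nhds x]
      fun y => a * (if n = i then 1 else 0) * coordNormPow n (a - 1) b y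
        + b * (y i * coordNormPow n a (b - 2) y) := by
  have hopen : IsOpen {y : EuclideanSpace ℝ (Fin N) | 0 < y n} :=
    isOpen_lt continuous_const (EuclideanSpace.proj (𝕜 := ℝ) n).continuous
  filter_upwards [hopen.mem_nhds hx] with y hy
  rw [fderiv_coordNormPow_apply hy, EuclideanSpace.inner_single_right, PiLp.single_apply]
  simp only [conj_trivial]
  ring

theorem second_partial_coordNormPow (hx : 0 < x n) (a b : ℝ) (i : Fin N) :
    fderiv ℝ (fun y => fderiv ℝ (coordNormPow n a b) y (EuclideanSpace.single i 1)) x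
        (EuclideanSpace.single i 1)
      = (if n = i then a * (a - 1) * coordNormPow n (a - 2) b x
            + 2 * a * b * (x n * coordNormPow n (a - 1) (b - 2) x) else 0)
        + b * coordNormPow n a (b - 2) x + b * (b - 2) * x i ^ 2 * coordNormPow n a (b - 4) x := by
  have h : HasFDerivAt (fun y : EuclideanSpace ℝ (Fin N) => (a * if n = i then 1 else 0)
      * coordNormPow n (a - 1) b y + b * (y i * coordNormPow n a (b - 2) y)) _ x :=
    ((hasFDerivAt_coordNormPow hx (a - 1) b).const_mul (a * if n = i then 1 else 0)).add
    (((EuclideanSpace.proj (𝕜 := ℝ) i).hasFDerivAt.mul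
      (hasFDerivAt_coordNormPow hx a (b - 2))).const_mul b)
  rw [(fderiv_coordNormPow_single_eventuallyEq hx a b i).fderiv_eq, h.fderiv]
  simp only [add_apply, smul_apply, smul_eq_mul, PiLp.proj_apply, innerSL_apply_apply,
    EuclideanSpace.inner_single_right, PiLp.single_apply, conj_trivial, mul_one,
    if_true, show a - 1 - 1 = a - 2 by ring, show b - 2 - 2 = b - 4 by ring]
  split_ifs with hni
  · subst hni; ring
  · ring

theorem lap_coordNormPow (hx : 0 < x n) (a b : ℝ) :
    lap (coordNormPow n a b) x
      = a * (a - 1) * coordNormPow n (a - 2) b x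
        + b * (2 * a + b + N - 2) * coordNormPow n a (b - 2) x := by
  have hsq : ∑ i, x i ^ 2 = ‖x‖ ^ 2 := by simp [EuclideanSpace.norm_sq_eq]
  simp only [lap, second_partial_coordNormPow hx, Finset.sum_add_distrib, Finset.sum_ite_eq,
    Finset.mem_univ, if_true, Finset.sum_const, Finset.card_univ, Fintype.card_fin, nsmul_eq_mul,
    ← Finset.sum_mul, ← Finset.mul_sum, hsq]
  rw [coord_mul_coordNormPow hx, mul_assoc _ (‖x‖ ^ 2),
    show b - 4 = b - 2 - 2 by ring, norm_sq_mul_coordNormPow hx]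
  ring

theorem gradient_coordNormPow (hx : 0 < x n) (a b : ℝ) :
    gradient (coordNormPow n a b) x
      = (a * coordNormPow n (a - 1) b x) • EuclideanSpace.single n 1
        + (b * coordNormPow n a (b - 2) x) • x := by
  refine (hasGradientAt_iff_hasFDerivAt.mpr ?_).gradient
  refine (hasFDerivAt_coordNormPow hx a b).congr_fderiv ?_
  ext v
  simp only [add_apply, smul_apply, smul_eq_mul, PiLp.proj_apply, innerSL_apply_apply,
    InnerProductSpace.toDual_apply_apply, inner_add_left, real_inner_smul_left,
    EuclideanSpace.inner_single_left, conj_trivial, one_mul]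

theorem norm_gradient_coordNormPow_sq (hx : 0 < x n) (a b : ℝ) :
    ‖gradient (coordNormPow n a b) x‖ ^ 2
      = (a * coordNormPow n (a - 1) b x) ^ 2
        + b * (2 * a + b) * coordNormPow n a b x * coordNormPow n a (b - 2) x := by
  rw [gradient_coordNormPow hx, norm_add_sq_real, real_inner_smul_left, real_inner_smul_right,
    EuclideanSpace.inner_single_left, norm_smul, norm_smul, PiLp.norm_single, norm_one,
    mul_pow, mul_pow, Real.norm_eq_abs, Real.norm_eq_abs, sq_abs, sq_abs, conj_trivial]
  linear_combination (2 * a * b * coordNormPow n a (b - 2) x) * coord_mul_coordNormPow hx a b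
    + (b ^ 2 * coordNormPow n a (b - 2) x) * norm_sq_mul_coordNormPow hx a b

theorem mul_coordNormPow_le_norm_gradient (hx : 0 < x n) {a b : ℝ} (ha : 0 ≤ a)
    (hab : 0 ≤ b * (2 * a + b)) :
    a * coordNormPow n (a - 1) b x ≤ ‖gradient (coordNormPow n a b) x‖ := by
  have hsq := norm_gradient_coordNormPow_sq hx a b
  have hcross : 0 ≤ b * (2 * a + b) * coordNormPow n a b x * coordNormPow n a (b - 2) x :=
    mul_nonneg (mul_nonneg hab (coordNormPow_pos hx a b).le) (coordNormPow_pos hx a (b - 2)).le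
  have hA : 0 ≤ a * coordNormPow n (a - 1) b x := mul_nonneg ha (coordNormPow_pos hx _ _).le
  nlinarith [norm_nonneg (gradient (coordNormPow n a b) x)]

end CoordNormPow

theorem lap_add_hardy_le_norm_gradient_rpow {N : ℕ} {n : Fin N} {x : EuclideanSpace ℝ (Fin N)}
    (hx : 0 < x n) {c α b q μ : ℝ} (hc : 0 < c) (hα0 : 0 < α) (hα1 : α ≤ 1) (hq : 0 ≤ q)
    (hb : 0 ≤ b * (2 * α + b)) (hdeg : α + (b - 2) = (α - 1) * q + b * q)
    (hμ : α * (α - 1) + μ = 0) (hc_eq : c ^ (q - 1) * α ^ q = b * (2 * α + b + N - 2)) :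
    lap (fun y => c * y n ^ α * ‖y‖ ^ b) x + μ / x n ^ 2 * (c * x n ^ α * ‖x‖ ^ b)
      ≤ ‖gradient (fun y => c * y n ^ α * ‖y‖ ^ b) x‖ ^ q := by
  set L := b * (2 * α + b + N - 2)
  have hfun : (fun y => c * y n ^ α * ‖y‖ ^ b) = fun y => c * coordNormPow n α b y :=
    funext fun y => mul_assoc _ _ _
  have hL : 0 ≤ L := hc_eq ▸ mul_nonneg (Real.rpow_nonneg hc.le _) (Real.rpow_nonneg hα0.le _)
  have hP : coordNormPow n α b x = x n ^ 2 * coordNormPow n (α - 2) b x := by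
    rw [← coord_mul_coordNormPow hx α, ← coord_mul_coordNormPow hx (α - 1), sub_sub]
    norm_num
    ring
  have hlhs : c * lap (coordNormPow n α b) x + μ / x n ^ 2 * (c * x n ^ α * ‖x‖ ^ b)
      = c * L * coordNormPow n α (b - 2) x := by
    have hX : x n ^ 2 ≠ 0 := by positivity
    rw [mul_assoc c, ← coordNormPow, lap_coordNormPow hx, hP, mul_left_comm c,
      ← mul_assoc, div_mul_cancel₀ _ hX]
    linear_combination c * coordNormPow n (α - 2) b x * hμ
  have hgrad := mul_coordNormPow_le_norm_gradient (n := n) hx hα0.le hb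
  have hA := coordNormPow_pos hx (α - 1) b
  rw [hfun, lap_const_mul, gradient_const_mul, norm_smul, Real.norm_of_nonneg hc.le, hlhs]
  calc c * L * coordNormPow n α (b - 2) x
      ≤ c * L * coordNormPow n ((α - 1) * q) (b * q) x := by
        gcongr
        exact coordNormPow_le_of_add_eq hx (by nlinarith) hdeg
    _ = (c * (α * coordNormPow n (α - 1) b x)) ^ q := by
        have hcq : c * c ^ (q - 1) = c ^ q := by
          rw [Real.rpow_sub hc, Real.rpow_one]
          field_simp
        rw [Real.mul_rpow hc.le (mul_pos hα0 hA).le, Real.mul_rpow hα0.le hA.le,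
          coordNormPow_rpow hx, ← hc_eq, ← hcq]
        ring
    _ ≤ (c * ‖gradient (coordNormPow n α b) x‖) ^ q := by
        have := mul_pos hα0 hA
        gcongr

theorem indicial_root_of_eq_half_add_sqrt {μ α : ℝ} (hμ : μ ∈ Ioc (0 : ℝ) (1 / 4))
    (hα : α = 1 / 2 + √(1 / 4 - μ)) : 1 / 2 ≤ α ∧ α ≤ 1 ∧ α * (α - 1) + μ = 0 := by
  have hsq := Real.sq_sqrt (show (0 : ℝ) ≤ 1 / 4 - μ by linarith [hμ.2])
  have hle : √(1 / 4 - μ) ≤ 1 / 2 :=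
    Real.sqrt_le_iff.mpr ⟨by norm_num, by linarith [hμ.1]⟩
  refine ⟨by linarith [Real.sqrt_nonneg (1 / 4 - μ)], by linarith, ?_⟩
  subst hα
  linear_combination hsq

/-- The separable supersolution `γ₁ x_N^α |x|^{-(2-q)/(q-1)-α}` on the half-space
(Step 1 of the proof of Theorem G). -/
theorem stmt_10 (N : ℕ) (hN : 3 ≤ N) (μ α q : ℝ)
    (hμ : μ ∈ Set.Ioc (0:ℝ) (1/4)) (hα : α = 1/2 + Real.sqrt (1/4 - μ))
    (hq1 : 1 < q) (hq2 : q < ((N : ℝ) + α) / ((N : ℝ) + α - 1))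
    (hlk : α * ((N : ℝ) + α - 2) < (2 - q) / (q - 1) * (q / (q - 1) - (N : ℝ)))
    (γ₁ : ℝ)
    (hγ₁ : γ₁ = (((2 - q) / (q - 1) * (q / (q - 1) - (N : ℝ)) - α * ((N : ℝ) + α - 2))
        / α ^ q) ^ (1 / (q - 1))) :
    ∀ x : EuclideanSpace ℝ (Fin N), 0 < x (lastIdx N (by omega)) →
      lap (fun y => γ₁ * (y (lastIdx N (by omega))) ^ α
            * ‖y‖ ^ (-(2 - q) / (q - 1) - α)) x
        + (μ / (x (lastIdx N (by omega))) ^ 2) *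
            (γ₁ * (x (lastIdx N (by omega))) ^ α * ‖x‖ ^ (-(2 - q) / (q - 1) - α))
        ≤ ‖gradient (fun y => γ₁ * (y (lastIdx N (by omega))) ^ α
            * ‖y‖ ^ (-(2 - q) / (q - 1) - α)) x‖ ^ q := by
  intro x hx
  obtain ⟨hα_half, hα_one, hα_root⟩ := indicial_root_of_eq_half_add_sqrt hμ hα
  have hq : q - 1 ≠ 0 := by linarith
  have hN3 : (3 : ℝ) ≤ N := by exact_mod_cast hN
  have hαs : α ≤ (2 - q) / (q - 1) := by
    have h := (lt_div_iff₀ (by linarith : (0 : ℝ) < N + α - 1)).mp hq2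
    rw [le_div_iff₀ (by linarith)]
    nlinarith
  have hαq : 0 < α ^ q := Real.rpow_pos_of_pos (by linarith) q
  have hL : 0 < (2 - q) / (q - 1) * (q / (q - 1) - N) - α * (N + α - 2) := by linarith
  have hγ_pos : 0 < γ₁ := hγ₁ ▸ Real.rpow_pos_of_pos (div_pos hL hαq) _
  refine lap_add_hardy_le_norm_gradient_rpow hx hγ_pos (by linarith) hα_one (by linarith)
    (by rw [neg_div]; nlinarith) (by field_simp; ring) hα_root ?_
  rw [hγ₁, one_div, Real.rpow_inv_rpow (div_pos hL hαq).le hq, div_mul_cancel₀ _ hαq.ne']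
  field_simp
  ring
end
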